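/- arXiv:2207.05237 — 7 statements merged into one kernel-verified Lean document; each statement's English description precedes it below -/
import Mathlib

section
/- Let p be a prime, k' a finite field of characteristic p, and A a commutative ℤ_p-algebra that is p-adically complete. Let 𝔖_A := (W(k') ⊗_{ℤ_p} A)[[u]] be the formal power series ring over W(k') ⊗_{ℤ_p} A, regarded as an A[[u]]-algebra via the map induced on coefficients by a ↦ 1 ⊗ a. Then an 𝔖_A-module M is projective as an 𝔖_A-module if and only if it is projective as an A[[u]]-module (via restriction of scalars). -/
open scoped TensorProduct

/-- The canonical `ℤ_p`-algebra structure on the Witt vectors of a ring of characteristic `p`,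
via the identification `W(𝔽_p) ≅ ℤ_p` and functoriality of Witt vectors. -/
noncomputable instance wittPadicAlgebra (p : ℕ) [Fact p.Prime]
    (k' : Type*) [CommRing k'] [CharP k' p] : Algebra ℤ_[p] (WittVector p k') :=
  ((WittVector.map (ZMod.castHom dvd_rfl k')).comp
    (WittVector.equiv p).symm.toRingHom).toAlgebra

/-!
`W(k')` is finite over `ℤ_p` by the complete Nakayama lemma, since the Teichmüller lifts of
the elements of `k'` generate it modulo `p`; being torsion free it is free, and it is formally
unramified because `p` generates its maximal ideal and the residue extension is one of finite
fields. These properties pass to the base change `W(k') ⊗ A` over `A` and then, coefficientwise,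
to `𝔖_A` over `A[[u]]`. Projectivity descends along the free extension `A[[u]] → 𝔖_A`, and it
ascends along it because `𝔖_A` is formally unramified over `A[[u]]`, which makes `M` a direct
summand of `𝔖_A ⊗_{A[[u]]} M`.
-/

open IsLocalRing

theorem Module.Projective.trans {R : Type*} (S : Type*) {M : Type*} [CommRing R] [CommRing S]
    [Algebra R S] [AddCommGroup M] [Module R M] [Module S M] [IsScalarTower R S M]
    [Module.Projective R S] [Module.Projective S M] : Module.Projective R M := by
  classical
  have : Module.Projective R (M →₀ S) := .of_equiv (finsuppLequivDFinsupp R).symm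
  obtain ⟨s, hs⟩ := Module.projective_def'.mp ‹Module.Projective S M›
  exact .of_split (s.restrictScalars R) ((Finsupp.linearCombination S id).restrictScalars R)
    (LinearMap.ext fun m ↦ congr($hs m))

section AdicNakayama

variable {R : Type*} [CommRing R] (I : Ideal R)

theorem IsPrecomplete.pi {ι : Type*} [Finite ι] (M : ι → Type*) [∀ j, AddCommGroup (M j)]
    [∀ j, Module R (M j)] [∀ j, IsPrecomplete I (M j)] : IsPrecomplete I (∀ j, M j) := by
  classical
  have := Fintype.ofFinite ι
  rw [← AdicCompletion.of_surjective_iff]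
  intro x
  have hy : ∀ j, ∃ y : M j, AdicCompletion.of I (M j) y = AdicCompletion.pi I M x j :=
    fun j ↦ AdicCompletion.of_surjective I (M j) _
  choose y hy using hy
  refine ⟨y, (AdicCompletion.piEquivOfFintype I M).injective ?_⟩
  rw [AdicCompletion.piEquivOfFintype_apply, AdicCompletion.piEquivOfFintype_apply]
  ext1 j
  rw [← hy, AdicCompletion.pi, LinearMap.pi_apply, AdicCompletion.map_of, LinearMap.proj_apply]

variable {I} in
theorem Submodule.span_range_eq_top_of_sup_smul_top {M : Type*} [AddCommGroup M] [Module R M]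
    [IsPrecomplete I R] [IsHausdorff I M] {ι : Type*} [Finite ι] (v : ι → M)
    (h : span R (Set.range v) ⊔ I • ⊤ = ⊤) : span R (Set.range v) = ⊤ := by
  have := Fintype.ofFinite ι
  have : IsPrecomplete I (ι → R) := .pi I _
  rw [← Fintype.range_linearCombination, LinearMap.range_eq_top]
  refine surjective_of_mkQ_comp_surjective (I := I) fun m ↦ ?_
  obtain ⟨m, rfl⟩ := Submodule.mkQ_surjective _ m
  obtain ⟨y, hy, z, hz, rfl⟩ :=
    Submodule.mem_sup.mp (h.symm ▸ Submodule.mem_top : m ∈ span R (Set.range v) ⊔ I • ⊤)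
  rw [← Fintype.range_linearCombination] at hy
  obtain ⟨c, rfl⟩ := hy
  refine ⟨c, ?_⟩
  simpa [Submodule.Quotient.eq] using hz

end AdicNakayama

namespace WittVector

variable (p : ℕ) [Fact p.Prime]

theorem map_maximalIdeal_padicInt (k : Type*) [CommRing k] [CharP k p] :
    (maximalIdeal ℤ_[p]).map (algebraMap ℤ_[p] (WittVector p k)) =
      Ideal.span {(p : WittVector p k)} := by
  rw [PadicInt.maximalIdeal_eq_span_p, Ideal.map_span, Set.image_singleton, map_natCast]

instance (k : Type*) [CommRing k] [CharP k p] [PerfectRing k p] :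
    IsAdicComplete (maximalIdeal ℤ_[p]) (WittVector p k) := by
  rw [← IsAdicComplete.map_algebraMap_iff (S := WittVector p k), map_maximalIdeal_padicInt]
  infer_instance

variable (k : Type*) [Field k] [CharP k p]

theorem algebraMap_padicInt_injective :
    Function.Injective (algebraMap ℤ_[p] (WittVector p k)) :=
  (map_injective _ (ZMod.castHom dvd_rfl k).injective).comp (WittVector.equiv p).symm.injective

instance : Module.IsTorsionFree ℤ_[p] (WittVector p k) :=
  Module.isTorsionFree_iff_algebraMap_injective.mpr (algebraMap_padicInt_injective p k)

theorem span_teichmuller_eq_top [Finite k] :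
    Submodule.span ℤ_[p] (Set.range (teichmuller p : k → WittVector p k)) = ⊤ := by
  refine Submodule.span_range_eq_top_of_sup_smul_top (I := maximalIdeal ℤ_[p]) _ ?_
  rw [Ideal.smul_top_eq_map, map_maximalIdeal_padicInt, ← ker_constantCoeff, eq_top_iff]
  intro x _
  have hx : x - teichmuller p (constantCoeff x) ∈
      RingHom.ker (constantCoeff (p := p) (R := k)) := by
    rw [RingHom.mem_ker, map_sub, constantCoeff_apply (teichmuller p _), teichmuller_coeff_zero,
      sub_self]
  exact Submodule.mem_sup.mpr ⟨_, Submodule.subset_span ⟨_, rfl⟩, _, hx, add_sub_cancel _ _⟩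

instance [Finite k] : Module.Finite ℤ_[p] (WittVector p k) :=
  ⟨span_teichmuller_eq_top p k ▸ Submodule.fg_span (Set.finite_range _)⟩

instance [Finite k] : Algebra.FormallyUnramified ℤ_[p] (WittVector p k) := by
  refine Algebra.FormallyUnramified.of_map_maximalIdeal ?_
  rw [map_maximalIdeal_padicInt, (irreducible p).maximalIdeal_eq]

end WittVector

namespace PowerSeries

variable {R B : Type*} [CommRing R] [CommRing B] [Algebra R B]

theorem coeff_smul_C (g : R⟦X⟧) (b : B) (n : ℕ) : coeff n (g • C b) = coeff n g • b := by
  rw [Algebra.smul_def, algebraMap_apply'', coeff_mul_C, coeff_map, Algebra.smul_def]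

instance : IsScalarTower R R⟦X⟧ B⟦X⟧ :=
  .of_algebraMap_eq fun r ↦ by
    rw [algebraMap_apply'', algebraMap_apply, algebraMap_apply, map_C,
      Algebra.algebraMap_self_apply]

end PowerSeries

namespace Module.Basis

open PowerSeries

variable {R B : Type*} [CommRing R] [CommRing B] [Algebra R B] {ι : Type*} [Finite ι]

noncomputable def powerSeries (b : Basis ι R B) : Basis ι R⟦X⟧ B⟦X⟧ :=
  have := Fintype.ofFinite ι
  .mk (v := fun i ↦ C (b i))
    (Fintype.linearIndependent_iff.mpr fun g hg i ↦ PowerSeries.ext fun n ↦ by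
      have := congrArg (coeff n) hg
      simp only [map_sum, coeff_smul_C, map_zero] at this
      simpa using Fintype.linearIndependent_iff.mp b.linearIndependent _ this i)
    (fun f _ ↦ by
      have : f = ∑ i, PowerSeries.mk (fun n ↦ b.repr (coeff n f) i) • C (b i) :=
        PowerSeries.ext fun n ↦ by simp only [map_sum, coeff_smul_C, coeff_mk, b.sum_repr]
      rw [this]
      exact Submodule.sum_mem _ fun i _ ↦
        Submodule.smul_mem _ _ (Submodule.subset_span ⟨i, rfl⟩))

@[simp]
theorem powerSeries_apply (b : Basis ι R B) (i : ι) : b.powerSeries i = C (b i) := by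
  simp [powerSeries]

end Module.Basis

namespace PowerSeries

variable {R B : Type*} [CommRing R] [CommRing B] [Algebra R B] [Module.Free R B]
  [Module.Finite R B]

noncomputable def tensorAlgEquiv : R⟦X⟧ ⊗[R] B ≃ₐ[R⟦X⟧] B⟦X⟧ :=
  let b := Module.Free.chooseBasis R B
  let φ := AlgHom.liftEquiv R R⟦X⟧ B B⟦X⟧ (IsScalarTower.toAlgHom R B B⟦X⟧)
  .ofBijective φ <| by
    have : φ.toLinearMap = ((b.baseChange R⟦X⟧).equiv b.powerSeries (.refl _)).toLinearMap :=
      (b.baseChange R⟦X⟧).ext fun i ↦ by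
        rw [LinearEquiv.coe_coe, Module.Basis.equiv_apply]
        simp [φ]
    rw [← AlgHom.coe_toLinearMap, this]
    exact LinearEquiv.bijective _

instance : Module.Free R⟦X⟧ B⟦X⟧ := .of_basis (Module.Free.chooseBasis R B).powerSeries

instance : Module.Finite R⟦X⟧ B⟦X⟧ := .of_basis (Module.Free.chooseBasis R B).powerSeries

instance [Algebra.FormallyUnramified R B] : Algebra.FormallyUnramified R⟦X⟧ B⟦X⟧ :=
  .of_equiv tensorAlgEquiv

end PowerSeries

theorem projective_SA_iff_projective_AU_general
    (p : ℕ) [Fact p.Prime] (k' : Type*) [Field k'] [Fintype k'] [CharP k' p]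
    (A : Type*) [CommRing A] [Algebra ℤ_[p] A]
    (M : Type*) [AddCommGroup M]
    [Module (PowerSeries (WittVector p k' ⊗[ℤ_[p]] A)) M]
    [Module (PowerSeries A) M]
    (hcompat : ∀ (g : PowerSeries A) (m : M),
      g • m = (PowerSeries.map (Algebra.TensorProduct.includeRight :
        A →ₐ[ℤ_[p]] WittVector p k' ⊗[ℤ_[p]] A).toRingHom g) • m) :
    Module.Projective (PowerSeries (WittVector p k' ⊗[ℤ_[p]] A)) M ↔
      Module.Projective (PowerSeries A) M := by
  let _ : Algebra A (WittVector p k' ⊗[ℤ_[p]] A) := Algebra.TensorProduct.rightAlgebra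
  let e := Algebra.IsPushout.equiv ℤ_[p] A (WittVector p k') (WittVector p k' ⊗[ℤ_[p]] A)
  have : Module.Free A (WittVector p k' ⊗[ℤ_[p]] A) := .of_equiv e.toLinearEquiv
  have : Module.Finite A (WittVector p k' ⊗[ℤ_[p]] A) := .equiv e.toLinearEquiv
  have : Algebra.FormallyUnramified A (WittVector p k' ⊗[ℤ_[p]] A) := .of_equiv e
  have : IsScalarTower (PowerSeries A) (PowerSeries (WittVector p k' ⊗[ℤ_[p]] A)) M :=
    ⟨fun g f m ↦ by rw [Algebra.smul_def, mul_smul]; exact (hcompat g (f • m)).symm⟩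
  exact ⟨fun _ ↦ .trans (PowerSeries (WittVector p k' ⊗[ℤ_[p]] A)),
    fun _ ↦ Algebra.FormallyUnramified.projective_of_restrictScalars (PowerSeries A) _ M⟩

/-- Let `p` be a prime, `k'` a finite field of characteristic `p`, and `A` a commutative,
`p`-adically complete `ℤ_p`-algebra.  Let `𝔖_A := (W(k') ⊗_{ℤ_p} A)[[u]]`, regarded as an
`A[[u]]`-algebra via the map induced on coefficients by `a ↦ 1 ⊗ a`.  Then an `𝔖_A`-module `M`
is projective over `𝔖_A` if and only if it is projective as an `A[[u]]`-module via restriction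
of scalars. -/
theorem projective_SA_iff_projective_AU
    (p : ℕ) [Fact p.Prime] (k' : Type*) [Field k'] [Fintype k'] [CharP k' p]
    (A : Type*) [CommRing A] [Algebra ℤ_[p] A]
    (hA : IsAdicComplete (Ideal.span {(p : A)}) A)
    (M : Type*) [AddCommGroup M]
    [Module (PowerSeries (WittVector p k' ⊗[ℤ_[p]] A)) M]
    [Module (PowerSeries A) M]
    (hcompat : ∀ (g : PowerSeries A) (m : M),
      g • m = (PowerSeries.map (Algebra.TensorProduct.includeRight :
        A →ₐ[ℤ_[p]] WittVector p k' ⊗[ℤ_[p]] A).toRingHom g) • m) :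
    Module.Projective (PowerSeries (WittVector p k' ⊗[ℤ_[p]] A)) M ↔
      Module.Projective (PowerSeries A) M :=
  projective_SA_iff_projective_AU_general p k' A M hcompat
end

section
/- The kernel and cokernel of ∂ : C⁰ → C¹ are finite-dimensional F-vector spaces, and dim_F coker ∂ = dim_F ker ∂ + Σ_{i=0}^{f−1} #{ j ∈ ℤ : 0 ≤ j < r_i and j ≡ r_i + c_i − d_i (mod N) }. (In the paper's formulation: the space Ext¹ of extensions of the rank one Breuil–Kisin module M(r,a,c) by M(s,b,d) has F-dimension Δ + Σ_{i=0}^{f−1} #{ j ∈ [0, r_i) : j ≡ r_i + c_i − d_i (mod e(K'/K)) }, where Δ = dim_F Hom(M(r,a,c), M(s,b,d)) = dim_F ker ∂.) -/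
noncomputable section

open PowerSeries

/-- Tuples of power series whose nonzero coefficients occur only in degrees lying in the
prescribed congruence classes `e i` modulo `N`. -/
def goodTuples (F : Type*) [Field F] (f N : ℕ) (e : ZMod f → ZMod N) :
    Submodule F (ZMod f → PowerSeries F) where
  carrier := { μ | ∀ i n, (PowerSeries.coeff n) (μ i) ≠ 0 → (n : ZMod N) = e i }
  zero_mem' := by intro i n hn; simp at hn
  add_mem' := by
    intro x y hx hy i n hn
    by_cases h1 : (PowerSeries.coeff n) (x i) = 0
    · refine hy i n fun h2 => hn ?_
      simp [Pi.add_apply, map_add, h1, h2]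
    · exact hx i n h1
  smul_mem' := by
    intro t x hx i n hn
    refine hx i n fun h0 => hn ?_
    simp [Pi.smul_apply, map_smul, h0]

/-- The substitution `u ↦ u^p` on power series. -/
def expandPS (F : Type*) [Field F] (p : ℕ) (μ : PowerSeries F) : PowerSeries F :=
  PowerSeries.mk fun n => if p ∣ n then (PowerSeries.coeff (n / p)) μ else 0

theorem coeff_expandPS (F : Type*) [Field F] (p n : ℕ) (μ : PowerSeries F) :
    (PowerSeries.coeff n) (expandPS F p μ) =
      if p ∣ n then (PowerSeries.coeff (n / p)) μ else 0 :=
  PowerSeries.coeff_mk _ _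

theorem expandPS_add (F : Type*) [Field F] (p : ℕ) (μ ν : PowerSeries F) :
    expandPS F p (μ + ν) = expandPS F p μ + expandPS F p ν := by
  ext n
  simp only [map_add, coeff_expandPS]
  split <;> simp

theorem expandPS_smul (F : Type*) [Field F] (p : ℕ) (t : F) (μ : PowerSeries F) :
    expandPS F p (t • μ) = t • expandPS F p μ := by
  ext n
  simp only [map_smul, coeff_expandPS]
  split <;> simp

/-- The map `∂` of the explicit complex computing homomorphisms and extensions of rank one
Breuil–Kisin modules with tame descent data:
`∂((μ_j))_i = -a_i u^{r_i} μ_i + b_i u^{s_i} μ_{i-1}(u^p)`. -/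
def delMap (F : Type*) [Field F] (p f : ℕ) (a b : ZMod f → F) (r s : ZMod f → ℕ) :
    (ZMod f → PowerSeries F) →ₗ[F] (ZMod f → PowerSeries F) where
  toFun μ := fun i => -(PowerSeries.C (a i) * PowerSeries.X ^ r i * μ i)
      + PowerSeries.C (b i) * PowerSeries.X ^ s i * expandPS F p (μ (i - 1))
  map_add' := by
    intro x y
    funext i
    simp only [Pi.add_apply, expandPS_add, mul_add]
    ring
  map_smul' := by
    intro t x
    funext i
    simp only [Pi.smul_apply, RingHom.id_apply]
    rw [expandPS_smul]
    simp only [PowerSeries.smul_eq_C_mul]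
    ring

end

/-!
Choose `m` larger than every `r_i`. The coefficient of `u^(n + r_i)` in `(∂μ)_i` is `-a_i` times
the coefficient of `u^n` in `μ_i`, plus a coefficient of `μ_{i-1}` in degree at most
`(n + r_i)/p`, which is `< m` when `n < m` and `< n` when `n ≥ m`. Hence `∂` maps the tuples
vanishing below degree `m` bijectively onto the tuples of `C¹` whose `i`-th component vanishes
below degree `r_i + m` (a triangular system with invertible diagonal; the relations
`p c_{i-1} = c_i + r_i`, `p d_{i-1} = d_i + s_i` make the congruence conditions match). So
`dim coker ∂ - dim ker ∂` is the index of the induced map between the finite-dimensional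
quotients, `Σ_i (#{n < r_i + m : n ≡ r_i + c_i - d_i} - #{n < m : n ≡ c_i - d_i})`, and
shifting the first count by `r_i` leaves `Σ_i #{j < r_i : j ≡ r_i + c_i - d_i}`.
-/

open PowerSeries Module

section Index

variable {K V W : Type*} [Field K] [AddCommGroup V] [Module K V] [AddCommGroup W] [Module K W]
  {T : V →ₗ[K] W} {V' : Submodule K V} {W' : Submodule K W}

noncomputable def kerEquivKerMapQ (hmaps : V' ≤ W'.comap T)
    (hinj : Disjoint V' (LinearMap.ker T)) (hsurj : W' ≤ V'.map T) :
    LinearMap.ker T ≃ₗ[K] LinearMap.ker (V'.mapQ W' T hmaps) :=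
  have hinjective : Function.Injective (V'.mkQ ∘ₗ (LinearMap.ker T).subtype) := by
    rw [← LinearMap.ker_eq_bot, LinearMap.ker_comp, Submodule.ker_mkQ,
      ← Submodule.disjoint_iff_comap_eq_bot]
    exact hinj.symm
  have hrange : LinearMap.range (V'.mkQ ∘ₗ (LinearMap.ker T).subtype) =
      LinearMap.ker (V'.mapQ W' T hmaps) := by
    rw [LinearMap.range_comp, Submodule.range_subtype, Submodule.ker_mapQ]
    refine le_antisymm (Submodule.map_mono fun v hv => ?_) ?_
    · simp [LinearMap.mem_ker.mp hv]
    · rintro _ ⟨v, hv, rfl⟩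
      obtain ⟨v', hv', hTv'⟩ := hsurj hv
      refine ⟨v - v', by simp [hTv'], ?_⟩
      simpa [Submodule.Quotient.eq] using hv'
  (LinearEquiv.ofInjective _ hinjective).trans (LinearEquiv.ofEq _ _ hrange)

noncomputable def cokerEquivCokerMapQ (hmaps : V' ≤ W'.comap T) (hsurj : W' ≤ V'.map T) :
    (W ⧸ LinearMap.range T) ≃ₗ[K] (W ⧸ W') ⧸ LinearMap.range (V'.mapQ W' T hmaps) :=
  (Submodule.quotientQuotientEquivQuotient W' (LinearMap.range T)
      (hsurj.trans LinearMap.map_le_range)).symm.trans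
    (Submodule.quotEquivOfEq _ _ (Submodule.range_mapQ _ _ T hmaps).symm)

theorem finiteDimensional_ker_coker_and_finrank_add_eq [FiniteDimensional K (V ⧸ V')]
    [FiniteDimensional K (W ⧸ W')] (hmaps : V' ≤ W'.comap T)
    (hinj : Disjoint V' (LinearMap.ker T)) (hsurj : W' ≤ V'.map T) :
    FiniteDimensional K (LinearMap.ker T) ∧ FiniteDimensional K (W ⧸ LinearMap.range T) ∧
      finrank K (W ⧸ LinearMap.range T) + finrank K (V ⧸ V') =
        finrank K (LinearMap.ker T) + finrank K (W ⧸ W') := by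
  have eKer := kerEquivKerMapQ hmaps hinj hsurj
  have eCoker := cokerEquivCokerMapQ hmaps hsurj
  refine ⟨eKer.symm.finiteDimensional, eCoker.symm.finiteDimensional, ?_⟩
  have hV := LinearMap.finrank_range_add_finrank_ker (V'.mapQ W' T hmaps)
  have hW := Submodule.finrank_quotient_add_finrank (LinearMap.range (V'.mapQ W' T hmaps))
  rw [eKer.finrank_eq, eCoker.finrank_eq]
  omega

theorem finiteDimensional_inf_ker_coker_restrict_and_finrank_add_eq {M M' : Type*}
    [AddCommGroup M] [Module K M] [AddCommGroup M'] [Module K M'] (D : M →ₗ[K] M')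
    {C0 : Submodule K M} {C1 : Submodule K M'} (hD : ∀ x ∈ C0, D x ∈ C1)
    {V' : Submodule K C0} {W' : Submodule K C1} [FiniteDimensional K (C0 ⧸ V')]
    [FiniteDimensional K (C1 ⧸ W')] (hmaps : V' ≤ W'.comap (D.restrict hD))
    (hinj : Disjoint V' (LinearMap.ker (D.restrict hD))) (hsurj : W' ≤ V'.map (D.restrict hD)) :
    FiniteDimensional K ↥(C0 ⊓ LinearMap.ker D) ∧
      FiniteDimensional K (C1 ⧸ Submodule.comap C1.subtype (C0.map D)) ∧
      finrank K (C1 ⧸ Submodule.comap C1.subtype (C0.map D)) + finrank K (C0 ⧸ V') =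
        finrank K ↥(C0 ⊓ LinearMap.ker D) + finrank K (C1 ⧸ W') := by
  have eKer : LinearMap.ker (D.restrict hD) ≃ₗ[K] ↥(C0 ⊓ LinearMap.ker D) :=
    (LinearEquiv.ofEq _ _ (by rw [LinearMap.ker_restrict, Submodule.comap_inf,
      Submodule.comap_subtype_self, top_inf_eq])).trans
      (Submodule.comapSubtypeEquivOfLe inf_le_left)
  obtain ⟨hker, hcoker, hindex⟩ :=
    finiteDimensional_ker_coker_and_finrank_add_eq hmaps hinj hsurj
  rw [LinearMap.range_restrict, eKer.finrank_eq] at hindex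
  rw [LinearMap.range_restrict] at hcoker
  exact ⟨Module.Finite.equiv eKer, hcoker, hindex⟩

end Index

theorem two_mul_sub_div_le {p : ℕ} (hp : 2 ≤ p) (j s : ℕ) : 2 * ((j - s) / p) ≤ j :=
  calc 2 * ((j - s) / p) ≤ 2 * ((j - s) / 2) :=
        Nat.mul_le_mul_left 2 (Nat.div_le_div_left hp two_pos)
    _ ≤ j - s := Nat.mul_div_le (j - s) 2
    _ ≤ j := Nat.sub_le j s

theorem add_sub_div_lt_self {p m n r : ℕ} (hp : 2 ≤ p) (hr : r < m) (hn : m ≤ n) (s : ℕ) :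
    (n + r - s) / p < n := by
  have := two_mul_sub_div_le hp (n + r) s
  omega

section DelMap

variable {F : Type*} [Field F] (p : ℕ) {f : ℕ} (a b : ZMod f → F) (r s : ZMod f → ℕ)

theorem coeff_delMap (μ : ZMod f → F⟦X⟧) (i : ZMod f) (j : ℕ) :
    coeff j (delMap F p f a b r s μ i) =
      -(a i * if r i ≤ j then coeff (j - r i) (μ i) else 0) +
        b i * if s i ≤ j ∧ p ∣ j - s i then coeff ((j - s i) / p) (μ (i - 1)) else 0 := by
  simp only [delMap, LinearMap.coe_mk, AddHom.coe_mk, map_add, map_neg, mul_assoc, coeff_C_mul,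
    coeff_X_pow_mul', coeff_expandPS, ite_and]

theorem coeff_delMap_add (μ : ZMod f → F⟦X⟧) (i : ZMod f) (n : ℕ) :
    coeff (n + r i) (delMap F p f a b r s μ i) =
      -(a i * coeff n (μ i)) +
        b i * if s i ≤ n + r i ∧ p ∣ n + r i - s i then
          coeff ((n + r i - s i) / p) (μ (i - 1)) else 0 := by
  rw [coeff_delMap, if_pos (Nat.le_add_left _ _), Nat.add_sub_cancel]

theorem delMap_mem_goodTuples {N : ℕ} {e e' : ZMod f → ZMod N}
    (he' : ∀ i, e' i = e i + r i) (he'' : ∀ i, (p : ZMod N) * e (i - 1) + s i = e' i)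
    {μ : ZMod f → F⟦X⟧} (hμ : μ ∈ goodTuples F f N e) :
    delMap F p f a b r s μ ∈ goodTuples F f N e' := by
  intro i j hj
  rw [coeff_delMap] at hj
  by_cases hA : r i ≤ j ∧ coeff (j - r i) (μ i) ≠ 0
  · obtain ⟨hrj, hA⟩ := hA
    rw [he' i, ← hμ i _ hA, ← Nat.cast_add, Nat.sub_add_cancel hrj]
  · obtain ⟨⟨hsj, hdvd⟩, hB⟩ :
        (s i ≤ j ∧ p ∣ j - s i) ∧ coeff ((j - s i) / p) (μ (i - 1)) ≠ 0 := by
      by_contra h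
      apply hj
      split_ifs at hA h ⊢ <;> simp_all
    rw [← he'' i, ← hμ _ _ hB, ← Nat.cast_mul, Nat.mul_div_cancel' hdvd, ← Nat.cast_add,
      Nat.sub_add_cancel hsj]

def VanishesBelow (m : ZMod f → ℕ) (μ : ZMod f → F⟦X⟧) : Prop :=
  ∀ i n, n < m i → coeff n (μ i) = 0

variable {p r} (hp : 2 ≤ p) {m : ℕ} (hm : ∀ i, r i < m)
include hp hm

theorem vanishesBelow_delMap {μ : ZMod f → F⟦X⟧} (hμ : VanishesBelow (fun _ => m) μ) :
    VanishesBelow (fun i => r i + m) (delMap F p f a b r s μ) := by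
  intro i j (hj : j < r i + m)
  have := two_mul_sub_div_le hp j (s i)
  have := hm i
  have hA : (if r i ≤ j then coeff (j - r i) (μ i) else 0) = 0 :=
    ite_eq_right_iff.2 fun _ => hμ i _ (show j - r i < m by omega)
  have hB : (if s i ≤ j ∧ p ∣ j - s i then coeff ((j - s i) / p) (μ (i - 1)) else 0) = 0 :=
    ite_eq_right_iff.2 fun _ => hμ _ _ (show (j - s i) / p < m by omega)
  rw [coeff_delMap, hA, hB]
  simp

theorem eq_zero_of_delMap_eq_zero (ha : ∀ i, a i ≠ 0) {μ : ZMod f → F⟦X⟧}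
    (hμ : VanishesBelow (fun _ => m) μ) (hD : delMap F p f a b r s μ = 0) : μ = 0 := by
  suffices ∀ n i, coeff n (μ i) = 0 from funext fun i => PowerSeries.ext fun n => this n i
  intro n
  induction n using Nat.strong_induction_on with
  | _ n ih =>
  intro i
  rcases lt_or_ge n m with hn | hn
  · exact hμ i n hn
  · have h := coeff_delMap_add p a b r s μ i n
    have hB : (if s i ≤ n + r i ∧ p ∣ n + r i - s i then
        coeff ((n + r i - s i) / p) (μ (i - 1)) else 0) = 0 :=
      ite_eq_right_iff.2 fun _ => ih _ (add_sub_div_lt_self hp (hm i) hn (s i)) _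
    rw [hD, hB] at h
    simpa [ha i] using h

end DelMap

section Preimage

variable {F : Type*} [Field F] (p : ℕ) {f : ℕ} (m : ℕ) (a b : ZMod f → F)
  (r s : ZMod f → ℕ) (h : ZMod f → F⟦X⟧)

/-- The test `(n + r i - s i) / p < n` only makes the recursion well founded: it always holds
when `2 ≤ p` and `r i < m ≤ n` (see `coeff_delMapPreimage_of_le`). -/
noncomputable def delMapPreimageCoeff (n : ℕ) (i : ZMod f) : F :=
  if m ≤ n then
    (a i)⁻¹ * ((if _ : s i ≤ n + r i ∧ p ∣ n + r i - s i ∧ (n + r i - s i) / p < n then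
        b i * delMapPreimageCoeff ((n + r i - s i) / p) (i - 1) else 0) - coeff (n + r i) (h i))
  else 0
termination_by n

noncomputable def delMapPreimage : ZMod f → F⟦X⟧ :=
  fun i => mk fun n => delMapPreimageCoeff p m a b r s h n i

variable {p m r}

theorem vanishesBelow_delMapPreimage :
    VanishesBelow (fun _ => m) (delMapPreimage p m a b r s h) := by
  intro i n hn
  rw [delMapPreimage, coeff_mk, delMapPreimageCoeff, if_neg (Nat.not_le.2 hn)]

variable (hp : 2 ≤ p) (hm : ∀ i, r i < m)
include hp hm

theorem coeff_delMapPreimage_of_le {n : ℕ} (i : ZMod f) (hn : m ≤ n) :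
    coeff n (delMapPreimage p m a b r s h i) =
      (a i)⁻¹ * ((if s i ≤ n + r i ∧ p ∣ n + r i - s i then
        b i * coeff ((n + r i - s i) / p) (delMapPreimage p m a b r s h (i - 1)) else 0) -
          coeff (n + r i) (h i)) := by
  have hlt := add_sub_div_lt_self hp (hm i) hn (s i)
  rw [delMapPreimage, coeff_mk, delMapPreimageCoeff, if_pos hn]
  simp only [hlt, and_true, delMapPreimage, coeff_mk]
  rfl

theorem delMap_delMapPreimage (ha : ∀ i, a i ≠ 0) (hh : VanishesBelow (fun i => r i + m) h) :
    delMap F p f a b r s (delMapPreimage p m a b r s h) = h := by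
  funext i
  ext j
  rcases lt_or_ge j (r i + m) with hj | hj
  · rw [vanishesBelow_delMap a b s hp hm (vanishesBelow_delMapPreimage a b s h) i j hj, hh i j hj]
  · obtain ⟨n, rfl⟩ : ∃ n, j = n + r i := ⟨j - r i, by omega⟩
    rw [coeff_delMap_add, coeff_delMapPreimage_of_le a b s h hp hm i (by omega)]
    field_simp [ha i]
    split_ifs <;> ring

theorem delMapPreimage_mem_goodTuples {N : ℕ} {e e' : ZMod f → ZMod N}
    (he' : ∀ i, e' i = e i + r i) (he'' : ∀ i, (p : ZMod N) * e (i - 1) + s i = e' i)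
    (hh : h ∈ goodTuples F f N e') : delMapPreimage p m a b r s h ∈ goodTuples F f N e := by
  intro i n
  induction n using Nat.strong_induction_on generalizing i with
  | _ n ih =>
  intro hne
  rcases lt_or_ge n m with hn | hn
  · exact absurd (vanishesBelow_delMapPreimage a b s h i n hn) hne
  rw [coeff_delMapPreimage_of_le a b s h hp hm i hn] at hne
  by_cases hB : s i ≤ n + r i ∧ p ∣ n + r i - s i ∧
      coeff ((n + r i - s i) / p) (delMapPreimage p m a b r s h (i - 1)) ≠ 0
  · obtain ⟨hsn, hdvd, hB⟩ := hB
    have hcl := ih _ (add_sub_div_lt_self hp (hm i) hn (s i)) _ hB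
    have hcast : ((n + r i : ℕ) : ZMod N) = p * (((n + r i - s i) / p : ℕ) : ZMod N) + s i := by
      rw [← Nat.cast_mul, Nat.mul_div_cancel' hdvd, ← Nat.cast_add, Nat.sub_add_cancel hsn]
    rw [hcl, he'' i, he' i, Nat.cast_add] at hcast
    exact add_right_cancel hcast
  · have hzero : (if s i ≤ n + r i ∧ p ∣ n + r i - s i then
        b i * coeff ((n + r i - s i) / p) (delMapPreimage p m a b r s h (i - 1)) else 0) = 0 :=
      ite_eq_right_iff.2 fun hc => by
        rw [not_and, not_and, not_not] at hB
        rw [hB hc.1 hc.2, mul_zero]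
    have hH : coeff (n + r i) (h i) ≠ 0 := fun h0 => hne (by rw [hzero, h0]; simp)
    have hcl := hh i _ hH
    rw [he' i, Nat.cast_add] at hcl
    exact add_right_cancel hcl

end Preimage

section Truncation

variable {f N : ℕ} [NeZero f]

def lowIndices (mb : ZMod f → ℕ) (e : ZMod f → ZMod N) : Finset ((_ : ZMod f) × ℕ) :=
  Finset.univ.sigma fun i => (Finset.range (mb i)).filter fun n => (n : ZMod N) = e i

theorem mem_lowIndices {mb : ZMod f → ℕ} {e : ZMod f → ZMod N} {x : (_ : ZMod f) × ℕ} :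
    x ∈ lowIndices mb e ↔ x.2 < mb x.1 ∧ (x.2 : ZMod N) = e x.1 := by
  simp [lowIndices]

noncomputable def lowCoeffs (F : Type*) [Field F] (e : ZMod f → ZMod N) (mb : ZMod f → ℕ) :
    goodTuples F f N e →ₗ[F] (lowIndices mb e → F) where
  toFun μ x := coeff x.1.2 (μ.1 x.1.1)
  map_add' _ _ := by funext; simp
  map_smul' _ _ := by funext; simp

variable {F : Type*} [Field F] (e : ZMod f → ZMod N) (mb : ZMod f → ℕ)

theorem mem_ker_lowCoeffs {μ : goodTuples F f N e} :
    μ ∈ LinearMap.ker (lowCoeffs F e mb) ↔ VanishesBelow mb μ.1 := by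
  refine ⟨fun hμ i n hn => ?_, fun hμ => funext fun x => hμ _ _ (mem_lowIndices.1 x.2).1⟩
  by_contra hne
  exact hne (congrFun hμ ⟨⟨i, n⟩, mem_lowIndices.2 ⟨hn, μ.2 i n hne⟩⟩)

theorem lowCoeffs_surjective : Function.Surjective (lowCoeffs F e mb) := by
  classical
  intro g
  refine ⟨⟨fun i => mk fun n => if hx : ⟨i, n⟩ ∈ lowIndices mb e then g ⟨_, hx⟩ else 0,
    fun i n hne => ?_⟩, funext fun x => ?_⟩
  · rw [coeff_mk] at hne
    exact (mem_lowIndices.1 (dite_ne_right_iff.1 hne).1).2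
  · simp [lowCoeffs, x.2]

instance : FiniteDimensional F (goodTuples F f N e ⧸ LinearMap.ker (lowCoeffs F e mb)) :=
  ((lowCoeffs F e mb).quotKerEquivOfSurjective (lowCoeffs_surjective e mb)).symm.finiteDimensional

theorem finrank_quotient_ker_lowCoeffs :
    finrank F (goodTuples F f N e ⧸ LinearMap.ker (lowCoeffs F e mb)) =
      ∑ i, ((Finset.range (mb i)).filter fun n : ℕ => (n : ZMod N) = e i).card := by
  rw [((lowCoeffs F e mb).quotKerEquivOfSurjective (lowCoeffs_surjective e mb)).finrank_eq,
    finrank_fintype_fun_eq_card, Fintype.card_coe, lowIndices, Finset.card_sigma]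

end Truncation

theorem card_filter_range_add {N : ℕ} (y : ZMod N) (r m : ℕ) :
    ((Finset.range (r + m)).filter fun n : ℕ => (n : ZMod N) = y + r).card =
      ((Finset.range r).filter fun n : ℕ => (n : ZMod N) = y + r).card +
        ((Finset.range m).filter fun n : ℕ => (n : ZMod N) = y).card := by
  simp only [← Nat.count_eq_card_filter_range, Nat.count_add, Nat.cast_add, add_comm (r : ZMod N),
    add_left_inj]

section Restriction

variable {F : Type*} [Field F] {p f N : ℕ} [NeZero f] (a b : ZMod f → F) {r : ZMod f → ℕ}
  (s : ZMod f → ℕ) {e e' : ZMod f → ZMod N}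
  (hD : ∀ μ ∈ goodTuples F f N e, delMap F p f a b r s μ ∈ goodTuples F f N e')
  {m : ℕ} (hp : 2 ≤ p) (hm : ∀ i, r i < m)
include hp hm

theorem ker_lowCoeffs_le_comap_restrict_delMap :
    LinearMap.ker (lowCoeffs F e fun _ => m) ≤
      (LinearMap.ker (lowCoeffs F e' fun i => r i + m)).comap
        ((delMap F p f a b r s).restrict hD) := by
  intro μ hμ
  rw [Submodule.mem_comap, mem_ker_lowCoeffs, LinearMap.coe_restrict_apply]
  exact vanishesBelow_delMap a b s hp hm ((mem_ker_lowCoeffs _ _).1 hμ)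

theorem disjoint_ker_lowCoeffs_ker_restrict_delMap (ha : ∀ i, a i ≠ 0) :
    Disjoint (LinearMap.ker (lowCoeffs F e fun _ => m))
      (LinearMap.ker ((delMap F p f a b r s).restrict hD)) := by
  rw [Submodule.disjoint_def]
  intro μ hμ hDμ
  exact Subtype.ext <| eq_zero_of_delMap_eq_zero a b s hp hm ha ((mem_ker_lowCoeffs _ _).1 hμ)
    (by rw [← LinearMap.coe_restrict_apply hD, hDμ, Submodule.coe_zero])

theorem ker_lowCoeffs_le_map_restrict_delMap (ha : ∀ i, a i ≠ 0)
    (he' : ∀ i, e' i = e i + r i) (he'' : ∀ i, (p : ZMod N) * e (i - 1) + s i = e' i) :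
    LinearMap.ker (lowCoeffs F e' fun i => r i + m) ≤
      (LinearMap.ker (lowCoeffs F e fun _ => m)).map ((delMap F p f a b r s).restrict hD) := by
  intro h hh
  rw [mem_ker_lowCoeffs] at hh
  refine ⟨⟨delMapPreimage p m a b r s h,
    delMapPreimage_mem_goodTuples a b s h hp hm he' he'' h.2⟩,
    (mem_ker_lowCoeffs _ _).2 (vanishesBelow_delMapPreimage a b s h), ?_⟩
  exact Subtype.ext <|
    (LinearMap.coe_restrict_apply hD _).trans (delMap_delMapPreimage a b s h hp hm ha hh)

end Restriction

theorem ext_dimension_formula_general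
    (p f f' : ℕ) (hp : p.Prime) [NeZero f]
    (F : Type*) [Field F]
    (a b : ZMod f → Fˣ) (r s : ZMod f → ℕ)
    (c d : ZMod f → ZMod (p ^ f' - 1))
    (hc : ∀ i, (p : ZMod (p ^ f' - 1)) * c (i - 1) = c i + (r i : ZMod (p ^ f' - 1)))
    (hd : ∀ i, (p : ZMod (p ^ f' - 1)) * d (i - 1) = d i + (s i : ZMod (p ^ f' - 1))) :
    let N := p ^ f' - 1
    let C0 := goodTuples F f N fun i => c i - d i
    let C1 := goodTuples F f N fun i => (r i : ZMod N) + c i - d i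
    let D := delMap F p f (fun i => (a i : F)) (fun i => (b i : F)) r s
    FiniteDimensional F ↥(C0 ⊓ LinearMap.ker D) ∧
    FiniteDimensional F (↥C1 ⧸ Submodule.comap C1.subtype (Submodule.map D C0)) ∧
    Module.finrank F (↥C1 ⧸ Submodule.comap C1.subtype (Submodule.map D C0)) =
      Module.finrank F ↥(C0 ⊓ LinearMap.ker D) +
      ∑ i : ZMod f, ((Finset.range (r i)).filter
        (fun j : ℕ => ((j : ZMod N) = (r i : ZMod N) + c i - d i))).card := by
  intro N C0 C1 D
  obtain ⟨m, hm⟩ : ∃ m, ∀ i, r i < m :=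
    ⟨∑ i, r i + 1, fun i => Nat.lt_succ_of_le (Finset.single_le_sum (by simp) (Finset.mem_univ i))⟩
  have he' (i : ZMod f) : (r i : ZMod N) + c i - d i = c i - d i + r i := by ring
  have he'' (i : ZMod f) : (p : ZMod N) * (c (i - 1) - d (i - 1)) + s i = r i + c i - d i := by
    rw [mul_sub, hc, hd]; ring
  have ha (i : ZMod f) : (a i : F) ≠ 0 := (a i).ne_zero
  have hD (μ) : μ ∈ C0 → D μ ∈ C1 := delMap_mem_goodTuples p _ _ r s he' he''
  obtain ⟨hker, hcoker, hindex⟩ :=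
    finiteDimensional_inf_ker_coker_restrict_and_finrank_add_eq D hD
      (ker_lowCoeffs_le_comap_restrict_delMap _ _ s hD hp.two_le hm)
      (disjoint_ker_lowCoeffs_ker_restrict_delMap _ _ s hD hp.two_le hm ha)
      (ker_lowCoeffs_le_map_restrict_delMap _ _ s hD hp.two_le hm ha he' he'')
  refine ⟨hker, hcoker, ?_⟩
  simp only [C0, C1, finrank_quotient_ker_lowCoeffs, he', card_filter_range_add,
    Finset.sum_add_distrib] at hindex ⊢
  omega

/-- The kernel and cokernel of `∂ : C⁰ → C¹` are finite-dimensional `F`-vector spaces, and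
`dim coker ∂ = dim ker ∂ + Σ_i #{ j ∈ [0, r_i) : j ≡ r_i + c_i - d_i (mod N) }`, where
`N = p^{f'} - 1`. Equivalently: the space `Ext¹` of extensions of the rank one Breuil–Kisin
module `M(r,a,c)` by `M(s,b,d)` has `F`-dimension `Δ + Σ_i #{ j ∈ [0, r_i) :
j ≡ r_i + c_i - d_i (mod e(K'/K)) }` with `Δ = dim Hom(M(r,a,c), M(s,b,d)) = dim ker ∂`. -/
theorem ext_dimension_formula
    (p f f' : ℕ) (hp : p.Prime) [NeZero f] (hf' : 0 < f') (hff' : f ∣ f')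
    (F : Type*) [Field F] [Fintype F] [CharP F p]
    (a b : ZMod f → Fˣ) (r s : ZMod f → ℕ)
    (c d : ZMod f → ZMod (p ^ f' - 1))
    (hc : ∀ i, (p : ZMod (p ^ f' - 1)) * c (i - 1) = c i + (r i : ZMod (p ^ f' - 1)))
    (hd : ∀ i, (p : ZMod (p ^ f' - 1)) * d (i - 1) = d i + (s i : ZMod (p ^ f' - 1))) :
    let N := p ^ f' - 1
    let C0 := goodTuples F f N fun i => c i - d i
    let C1 := goodTuples F f N fun i => (r i : ZMod N) + c i - d i
    let D := delMap F p f (fun i => (a i : F)) (fun i => (b i : F)) r s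
    FiniteDimensional F ↥(C0 ⊓ LinearMap.ker D) ∧
    FiniteDimensional F (↥C1 ⧸ Submodule.comap C1.subtype (Submodule.map D C0)) ∧
    Module.finrank F (↥C1 ⧸ Submodule.comap C1.subtype (Submodule.map D C0)) =
      Module.finrank F ↥(C0 ⊓ LinearMap.ker D) +
      ∑ i : ZMod f, ((Finset.range (r i)).filter
        (fun j : ℕ => ((j : ZMod N) = (r i : ZMod N) + c i - d i))).card :=
  ext_dimension_formula_general p f f' hp F a b r s c d hc hd
end

section
/- Then: (a) for every i, p^f − 1 divides Σ_{j=1}^{f} p^{f−j} r_{i+j} (indices taken mod f), so that α_i(r) := (Σ_{j=1}^{f} p^{f−j} r_{i+j})/(p^f − 1) is an integer, and likewise α_i(s); (b) dim_F ker ∂ ≤ 1; and (c) ker ∂ ≠ 0 if and only if ∏_{i=0}^{f−1} a_i = ∏_{i=0}^{f−1} b_i, α_i(r) ≥ α_i(s) for all i, and c_0 − α_0(r) = d_0 − α_0(s) in ℤ/Nℤ. (ker ∂ is the space of homomorphisms of Breuil–Kisin modules with descent data M(r,a,c) → M(s,b,d); the criterion in (c) says that a nonzero such map exists exactly when the associated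 Galois characters agree and α_i(M) ≥ α_i(N) for all i.) -/
/-!
Put `α_i(r) = (Σ_j p^{f-j} r_{i+j}) / (p^f - 1)` and `δ_i = α_i(r) - α_i(s)`. Iterating
`p c_{i-1} = c_i + r_i` once around the cycle gives `(p^f - 1) c_i = Σ_j p^j r_{i-j}` modulo
`N`, and `p^f - 1 ∣ N`, whence (a); moreover `p δ_{i-1} = δ_i + r_i - s_i`.

Comparing coefficients in `∂μ = 0`, a nonzero coefficient of `μ_i` in degree `m` forces a
nonzero coefficient of `μ_{i-1}` in a degree `m'` with `m - δ_i = p (m' - δ_{i-1})`. Iterating,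
`m - δ_i` is divisible by every power of `p`, so `m = δ_i`. Thus a kernel element is a tuple of
monomials `λ_i u^{δ_i}` with `a_i λ_i = b_i λ_{i-1}`, determined by `λ_0`, which gives (b). Such a
nonzero tuple exists iff every `δ_i ≥ 0` and `∏ a_i = ∏ b_i`, and it lies in `C⁰` iff
`δ_0 ≡ c_0 - d_0`: the congruences at the other indices follow from the recurrences.
-/

open Finset PowerSeries

namespace ZMod

theorem dvd_of_natCast_eq_natCast_mul {q N w : ℕ} (hq : q ∣ N) {z : ZMod N}
    (h : (w : ZMod N) = q * z) : q ∣ w := by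
  obtain ⟨x, rfl⟩ := intCast_surjective z
  have hN : (N : ℤ) ∣ q * x - w :=
    (intCast_eq_intCast_iff_dvd_sub _ _ _).mp (by push_cast; exact h)
  exact Int.natCast_dvd_natCast.mp
    ((dvd_sub_right (dvd_mul_right _ _)).mp ((Int.natCast_dvd_natCast.mpr hq).trans hN))

variable {n : ℕ} [NeZero n] {P : ZMod n → Prop} {i₀ : ZMod n}

theorem forall_of_forall_imp_add_one (h₀ : P i₀) (h : ∀ i, P i → P (i + 1)) : ∀ i, P i := by
  have key : ∀ k : ℕ, P (i₀ + k) := by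
    intro k
    induction k with
    | zero => simpa using h₀
    | succ k ih => simpa [add_assoc] using h _ ih
  intro i
  simpa using key (i - i₀).val

theorem forall_of_forall_imp_sub_one (h₀ : P i₀) (h : ∀ i, P i → P (i - 1)) : ∀ i, P i := by
  have key := forall_of_forall_imp_add_one (P := fun j => P (-j)) (i₀ := -i₀) (by simpa using h₀)
    (fun j hj => by simpa [neg_add_eq_sub] using h _ hj)
  simpa using fun i => key (-i)

theorem prod_range_natCast {M : Type*} [CommMonoid M] (g : ZMod n → M) :
    ∏ j ∈ range n, g j = ∏ i, g i :=
  prod_bij' (fun j _ => j) (fun i _ => i.val) (fun _ _ => mem_univ _)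
    (fun i _ => mem_range.mpr i.val_lt) (fun _ hj => val_cast_of_lt (mem_range.mp hj))
    (fun i _ => natCast_zmod_val i) (fun _ _ => rfl)

theorem exists_eq_mul_apply_sub_one {G : Type*} [CommGroup G] (u : ZMod n → G)
    (hu : ∏ i, u i = 1) : ∃ l : ZMod n → G, ∀ i, l i = u i * l (i - 1) := by
  let Λ : ℕ → G := fun k => ∏ j ∈ range k, u (j + 1)
  have hΛ : Function.Periodic Λ n := by
    intro k
    have hshift : ∏ j ∈ range n, u (((k + j : ℕ) : ZMod n) + 1) = 1 := by
      push_cast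
      rw [prod_range_natCast (fun j : ZMod n => u (k + j + 1)), ← hu]
      exact Fintype.prod_equiv (Equiv.addLeft ((k : ZMod n) + 1)) _ _ fun j => by
        simp only [Equiv.coe_addLeft]; ring_nf
    simp only [Λ, prod_range_add, hshift, mul_one]
  have hcast : ∀ k : ℕ, Λ (k : ZMod n).val = Λ k := fun k => by
    rw [val_natCast, hΛ.map_mod_nat]
  refine ⟨fun i => Λ i.val, fun i => ?_⟩
  obtain ⟨k, rfl⟩ : ∃ k : ℕ, i = k + 1 := ⟨(i - 1).val, by simp⟩
  show Λ ((k : ZMod n) + 1).val = u (k + 1) * Λ ((k : ZMod n) + 1 - 1).val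
  rw [add_sub_cancel_right, ← Nat.cast_succ, hcast, hcast]
  simp only [Λ, prod_range_succ, Nat.cast_succ, mul_comm]

end ZMod

namespace BreuilKisin

section WeightedSum

variable {R : Type*} [CommSemiring R] {f : ℕ} (t : R) (r : ZMod f → R)

def weightedSum (k : ℕ) (i : ZMod f) : R :=
  ∑ j ∈ range k, t ^ j * r (i - j)

theorem weightedSum_succ (k : ℕ) (i : ZMod f) :
    weightedSum t r (k + 1) i = t * weightedSum t r k (i - 1) + r i := by
  simp only [weightedSum, sum_range_succ', mul_sum, pow_succ', Nat.cast_succ, Nat.cast_zero,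
    sub_zero, pow_zero, one_mul, sub_add_eq_sub_sub_swap, mul_assoc]

theorem pow_mul_apply_sub_eq {c : ZMod f → R} (hc : ∀ i, t * c (i - 1) = c i + r i) (k : ℕ)
    (i : ZMod f) : t ^ k * c (i - k) = c i + weightedSum t r k i := by
  induction k generalizing i with
  | zero => simp [weightedSum]
  | succ k ih =>
    rw [weightedSum_succ, pow_succ', mul_assoc, Nat.cast_succ, sub_add_eq_sub_sub_swap, ih,
      mul_add, hc, add_right_comm, add_assoc]

theorem mul_weightedSum_sub_one [NeZero f] (i : ZMod f) :
    t * weightedSum t r f (i - 1) + r i = weightedSum t r f i + t ^ f * r i := by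
  rw [← weightedSum_succ, weightedSum, sum_range_succ, ZMod.natCast_self, sub_zero]
  rfl

theorem sum_range_eq_weightedSum [NeZero f] (i : ZMod f) :
    ∑ j ∈ range f, t ^ (f - 1 - j) * r (i + ((j + 1 : ℕ) : ZMod f)) = weightedSum t r f i := by
  rw [weightedSum, ← sum_range_reflect]
  refine sum_congr rfl fun j hj => ?_
  have hj : j + 1 ≤ f := mem_range.mp hj
  rw [show f - 1 - (f - 1 - j) = j by omega]
  congr 2
  rw [Nat.cast_succ, Nat.cast_sub (by omega), Nat.cast_sub (by omega), ZMod.natCast_self]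
  ring

end WeightedSum

variable {f p : ℕ}

theorem dvd_weightedSum {N : ℕ} (hp : 0 < p) (hN : p ^ f - 1 ∣ N) {r : ZMod f → ℕ}
    {c : ZMod f → ZMod N} (hc : ∀ i, (p : ZMod N) * c (i - 1) = c i + r i) (i : ZMod f) :
    p ^ f - 1 ∣ weightedSum p r f i := by
  have h := pow_mul_apply_sub_eq _ _ hc f i
  rw [ZMod.natCast_self, sub_zero] at h
  refine ZMod.dvd_of_natCast_eq_natCast_mul hN (z := c i) ?_
  push_cast [weightedSum, Nat.cast_sub (Nat.one_le_pow _ _ hp)] at h ⊢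
  linear_combination -h

theorem mul_weightedSum_div_sub_one [NeZero f] (hp : 1 < p) {r : ZMod f → ℕ}
    (hdvd : ∀ i, p ^ f - 1 ∣ weightedSum p r f i) (i : ZMod f) :
    p * (weightedSum p r f (i - 1) / (p ^ f - 1)) = weightedSum p r f i / (p ^ f - 1) + r i := by
  have hq : 0 < p ^ f - 1 := Nat.sub_pos_of_lt (Nat.one_lt_pow (NeZero.ne f) hp)
  have hrec := mul_weightedSum_sub_one (p : ℕ) r i
  obtain ⟨A, hA⟩ := hdvd (i - 1)
  obtain ⟨B, hB⟩ := hdvd i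
  rw [hA, hB] at hrec ⊢
  rw [Nat.mul_div_cancel_left _ hq, Nat.mul_div_cancel_left _ hq]
  refine Nat.eq_of_mul_eq_mul_left hq ?_
  zify [Nat.one_le_pow f p (by omega)] at hrec ⊢
  linear_combination hrec

section Kernel

variable {F : Type*} [Field F] {a b : ZMod f → F} {r s : ZMod f → ℕ}
  {μ : ZMod f → PowerSeries F}

theorem mem_ker_delMap_iff : μ ∈ LinearMap.ker (delMap F p f a b r s) ↔
    ∀ i, C (a i) * X ^ r i * μ i = C (b i) * X ^ s i * expandPS F p (μ (i - 1)) := by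
  rw [LinearMap.mem_ker, funext_iff]
  exact forall_congr' fun i => neg_add_eq_zero

theorem coeff_C_mul_X_pow_mul (t : F) (k n : ℕ) (g : PowerSeries F) :
    coeff n (C t * X ^ k * g) = if k ≤ n then t * coeff (n - k) g else 0 := by
  rw [mul_assoc, coeff_C_mul, coeff_X_pow_mul']
  split_ifs <;> simp

theorem exists_coeff_sub_one_ne_zero (hμ : μ ∈ LinearMap.ker (delMap F p f a b r s)) {i : ZMod f}
    (ha : a i ≠ 0) {m : ℕ} (h : coeff m (μ i) ≠ 0) :
    ∃ m', coeff m' (μ (i - 1)) ≠ 0 ∧ m + r i = p * m' + s i ∧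
      a i * coeff m (μ i) = b i * coeff m' (μ (i - 1)) := by
  have e := congrArg (coeff (m + r i)) (mem_ker_delMap_iff.mp hμ i)
  have hne : a i * coeff m (μ i) ≠ 0 := mul_ne_zero ha h
  rw [coeff_C_mul_X_pow_mul, if_pos le_add_self, Nat.add_sub_cancel, coeff_C_mul_X_pow_mul,
    coeff_expandPS] at e
  split_ifs at e with hs hdvd
  · refine ⟨(m + r i - s i) / p, fun h0 => hne (by rw [e, h0, mul_zero]), ?_, e⟩
    rw [Nat.mul_div_cancel' hdvd]
    omega
  all_goals simp_all

theorem exists_coeff_ne_zero_of_ne_zero [NeZero f] (hμ : μ ∈ LinearMap.ker (delMap F p f a b r s))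
    (ha : ∀ i, a i ≠ 0) (hμ0 : μ ≠ 0) (i : ZMod f) : ∃ m, coeff m (μ i) ≠ 0 := by
  obtain ⟨i₀, m₀, h₀⟩ : ∃ i m, coeff m (μ i) ≠ 0 := by
    by_contra! h
    exact hμ0 (funext fun i => PowerSeries.ext (h i))
  refine ZMod.forall_of_forall_imp_sub_one (P := fun i => ∃ m, coeff m (μ i) ≠ 0) ⟨m₀, h₀⟩
    (fun j ⟨m, hm⟩ => ?_) i
  obtain ⟨m', hm', -⟩ := exists_coeff_sub_one_ne_zero hμ (ha j) hm
  exact ⟨m', hm'⟩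

variable {δ : ZMod f → ℤ}

theorem natCast_eq_of_coeff_ne_zero (hp : 1 < p) (hμ : μ ∈ LinearMap.ker (delMap F p f a b r s))
    (ha : ∀ i, a i ≠ 0) (hδ : ∀ i, p * δ (i - 1) = δ i + r i - s i) {i : ZMod f} {m : ℕ}
    (h : coeff m (μ i) ≠ 0) : (m : ℤ) = δ i := by
  have hdvd : ∀ k i m, coeff m (μ i) ≠ 0 → (p : ℤ) ^ k ∣ m - δ i := by
    intro k
    induction k with
    | zero => simp
    | succ k ih =>
      intro i m h
      obtain ⟨m', h', hm, -⟩ := exists_coeff_sub_one_ne_zero hμ (ha i) h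
      have hm' : (m : ℤ) + r i = p * m' + s i := mod_cast hm
      have hstep : (m : ℤ) - δ i = p * (m' - δ (i - 1)) := by linear_combination hm' + hδ i
      rw [hstep, pow_succ']
      exact mul_dvd_mul_left _ (ih _ _ h')
  by_contra hne
  obtain ⟨k, hk⟩ := Int.finiteMultiplicity_iff.mpr
    ⟨by rw [Int.natAbs_natCast]; exact hp.ne', sub_ne_zero.mpr hne⟩
  exact hk (hdvd _ _ _ h)

theorem nonneg_and_coeff_toNat_ne_zero [NeZero f] (hp : 1 < p)
    (hμ : μ ∈ LinearMap.ker (delMap F p f a b r s)) (ha : ∀ i, a i ≠ 0)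
    (hδ : ∀ i, p * δ (i - 1) = δ i + r i - s i) (hμ0 : μ ≠ 0) (i : ZMod f) :
    0 ≤ δ i ∧ coeff (δ i).toNat (μ i) ≠ 0 := by
  obtain ⟨m, hm⟩ := exists_coeff_ne_zero_of_ne_zero hμ ha hμ0 i
  rw [← natCast_eq_of_coeff_ne_zero hp hμ ha hδ hm, Int.toNat_natCast]
  exact ⟨m.cast_nonneg, hm⟩

theorem rank_ker_delMap_le_one [NeZero f] (hp : 1 < p) (ha : ∀ i, a i ≠ 0)
    (hδ : ∀ i, p * δ (i - 1) = δ i + r i - s i) :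
    Module.rank F (LinearMap.ker (delMap F p f a b r s)) ≤ 1 := by
  let φ := (coeff (δ 0).toNat).comp
    ((LinearMap.proj (0 : ZMod f)).comp (LinearMap.ker (delMap F p f a b r s)).subtype)
  refine (LinearMap.rank_le_of_injective φ ?_).trans (Module.rank_self F).le
  refine (injective_iff_map_eq_zero φ).mpr fun μ hφ => ?_
  by_contra hμ0
  exact (nonneg_and_coeff_toNat_ne_zero hp μ.2 ha hδ (by simpa using hμ0) 0).2 hφ

theorem prod_eq_prod_of_mem_ker_delMap [NeZero f] (hp : 1 < p)
    (hμ : μ ∈ LinearMap.ker (delMap F p f a b r s)) (ha : ∀ i, a i ≠ 0)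
    (hδ : ∀ i, p * δ (i - 1) = δ i + r i - s i) (hμ0 : μ ≠ 0) :
    ∏ i, a i = ∏ i, b i := by
  have hlead := nonneg_and_coeff_toNat_ne_zero hp hμ ha hδ hμ0
  let l i := coeff (δ i).toNat (μ i)
  have hl : ∀ i, a i * l i = b i * l (i - 1) := by
    intro i
    obtain ⟨m', hm', -, e⟩ := exists_coeff_sub_one_ne_zero hμ (ha i) (hlead i).2
    have := natCast_eq_of_coeff_ne_zero hp hμ ha hδ hm'
    rwa [show m' = (δ (i - 1)).toNat by omega] at e
  have hprod : (∏ i, a i) * ∏ i, l i = (∏ i, b i) * ∏ i, l i := by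
    rw [← prod_mul_distrib, ← (Equiv.subRight (1 : ZMod f)).prod_comp l, ← prod_mul_distrib]
    exact prod_congr rfl fun i _ => hl i
  exact mul_right_cancel₀ (prod_ne_zero_iff.mpr fun i _ => (hlead i).2) hprod

theorem expandPS_eq_expand (hp : p ≠ 0) (φ : PowerSeries F) : expandPS F p φ = expand p hp φ := by
  ext n
  rw [coeff_expandPS, coeff_expand]

theorem C_mul_X_pow_mul_monomial (t u : F) (k m : ℕ) :
    C t * X ^ k * monomial m u = monomial (k + m) (t * u) := by
  rw [← monomial_zero_eq_C_apply, X_pow_eq, monomial_mul_monomial, monomial_mul_monomial,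
    zero_add, mul_one]

theorem monomial_mem_ker_delMap (hp : 0 < p) {m : ZMod f → ℕ} {l : ZMod f → F}
    (hm : ∀ i, r i + m i = s i + p * m (i - 1)) (hl : ∀ i, a i * l i = b i * l (i - 1)) :
    (fun i => monomial (m i) (l i)) ∈ LinearMap.ker (delMap F p f a b r s) := by
  refine mem_ker_delMap_iff.mpr fun i => ?_
  rw [expandPS_eq_expand hp.ne', expand_monomial, C_mul_X_pow_mul_monomial,
    C_mul_X_pow_mul_monomial, hm, hl]

theorem monomial_mem_goodTuples {N : ℕ} {e : ZMod f → ZMod N} {m : ZMod f → ℕ}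
    (hm : ∀ i, (m i : ZMod N) = e i) (l : ZMod f → F) :
    (fun i => monomial (m i) (l i)) ∈ goodTuples F f N e := by
  intro i n hn
  rw [coeff_monomial] at hn
  split_ifs at hn with h
  · rw [h, hm]
  · exact absurd rfl hn

end Kernel

theorem eq_of_mul_apply_sub_one_eq [NeZero f] {R : Type*} [CommRing R] {t : R}
    {g x y : ZMod f → R} (hx : ∀ i, t * x (i - 1) = x i + g i)
    (hy : ∀ i, t * y (i - 1) = y i + g i) {i₀ : ZMod f} (h₀ : x i₀ = y i₀) : x = y := by
  refine funext <| ZMod.forall_of_forall_imp_add_one h₀ fun i hi => ?_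
  have hx' := hx (i + 1)
  have hy' := hy (i + 1)
  rw [add_sub_cancel_right] at hx' hy'
  linear_combination hy' - hx' + t * hi

theorem goodTuples_inf_ker_delMap_ne_bot_iff [NeZero f] (hp : 1 < p) {F : Type*} [Field F]
    {a b : ZMod f → Fˣ} {r s : ZMod f → ℕ} {N : ℕ} {e : ZMod f → ZMod N}
    (he : ∀ i, (p : ZMod N) * e (i - 1) = e i + r i - s i) {δ : ZMod f → ℤ}
    (hδ : ∀ i, p * δ (i - 1) = δ i + r i - s i) :
    goodTuples F f N e ⊓ LinearMap.ker (delMap F p f (a ·) (b ·) r s) ≠ ⊥ ↔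
      (∏ i, (a i : F)) = ∏ i, (b i : F) ∧ (∀ i, 0 ≤ δ i) ∧ (δ 0 : ZMod N) = e 0 := by
  have ha : ∀ i, (a i : F) ≠ 0 := fun i => (a i).ne_zero
  constructor
  · intro hne
    obtain ⟨μ, hμ, hμ0⟩ := (Submodule.ne_bot_iff _).mp hne
    obtain ⟨hgood, hker⟩ := Submodule.mem_inf.mp hμ
    have hlead := nonneg_and_coeff_toNat_ne_zero hp hker ha hδ hμ0
    refine ⟨prod_eq_prod_of_mem_ker_delMap hp hker ha hδ hμ0, fun i => (hlead i).1, ?_⟩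
    have h0 := hgood 0 _ (hlead 0).2
    rwa [← Int.cast_natCast, Int.toNat_of_nonneg (hlead 0).1] at h0
  · rintro ⟨hab, hδ0, he0⟩
    have hu : ∏ i, b i / a i = 1 := by
      rw [prod_div_distrib, div_eq_one]
      exact Units.ext (by push_cast; exact hab.symm)
    obtain ⟨l, hl⟩ := ZMod.exists_eq_mul_apply_sub_one _ hu
    have hcong : (fun i => (δ i : ZMod N)) = e :=
      eq_of_mul_apply_sub_one_eq (g := fun i => (r i : ZMod N) - s i)
        (fun i => by simpa [add_sub_assoc] using congrArg (Int.cast : ℤ → ZMod N) (hδ i))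
        (fun i => by rw [he, add_sub_assoc]) he0
    have htoNat : ∀ i, ((δ i).toNat : ℤ) = δ i := fun i => Int.toNat_of_nonneg (hδ0 i)
    refine (Submodule.ne_bot_iff _).mpr ⟨fun i => monomial (δ i).toNat (l i : F),
      Submodule.mem_inf.mpr ⟨monomial_mem_goodTuples (fun i => ?_) _,
        monomial_mem_ker_delMap (by omega) (fun i => ?_) (fun i => ?_)⟩, fun h => ?_⟩
    · rw [← congrFun hcong i, ← Int.cast_natCast, htoNat]
    · zify
      rw [htoNat, htoNat]
      linear_combination -hδ i
    · rw [hl i, Units.val_mul, Units.val_div_eq_div_val]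
      field_simp [ha i]
    · simpa using congrArg (fun μ => coeff (δ 0).toNat (μ 0)) h

end BreuilKisin

open BreuilKisin in
theorem hom_rank_one_criterion_general
    (p f f' : ℕ) (hp : p.Prime) [NeZero f] (hff' : f ∣ f')
    (F : Type*) [Field F]
    (a b : ZMod f → Fˣ) (r s : ZMod f → ℕ)
    (c d : ZMod f → ZMod (p ^ f' - 1))
    (hc : ∀ i, (p : ZMod (p ^ f' - 1)) * c (i - 1) = c i + (r i : ZMod (p ^ f' - 1)))
    (hd : ∀ i, (p : ZMod (p ^ f' - 1)) * d (i - 1) = d i + (s i : ZMod (p ^ f' - 1))) :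
    let N := p ^ f' - 1
    let C0 := goodTuples F f N fun i => c i - d i
    let D := delMap F p f (fun i => (a i : F)) (fun i => (b i : F)) r s
    let Sr : ZMod f → ℕ := fun i =>
      ∑ j ∈ Finset.range f, p ^ (f - 1 - j) * r (i + ((j + 1 : ℕ) : ZMod f))
    let Ss : ZMod f → ℕ := fun i =>
      ∑ j ∈ Finset.range f, p ^ (f - 1 - j) * s (i + ((j + 1 : ℕ) : ZMod f))
    ((∀ i, (p ^ f - 1) ∣ Sr i) ∧ (∀ i, (p ^ f - 1) ∣ Ss i)) ∧
    Module.rank F ↥(C0 ⊓ LinearMap.ker D) ≤ 1 ∧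
    (C0 ⊓ LinearMap.ker D ≠ ⊥ ↔
      ((∏ i : ZMod f, (a i : F)) = ∏ i : ZMod f, (b i : F)) ∧
      (∀ i, Ss i / (p ^ f - 1) ≤ Sr i / (p ^ f - 1)) ∧
      c 0 - ((Sr 0 / (p ^ f - 1) : ℕ) : ZMod N) =
        d 0 - ((Ss 0 / (p ^ f - 1) : ℕ) : ZMod N)) := by
  intro N C0 D Sr Ss
  have hSr : Sr = weightedSum p r f := funext (sum_range_eq_weightedSum _ _)
  have hSs : Ss = weightedSum p s f := funext (sum_range_eq_weightedSum _ _)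
  have hN : p ^ f - 1 ∣ N := Nat.pow_sub_one_dvd_pow_sub_one p hff'
  have hdvd_r := dvd_weightedSum hp.pos hN hc
  have hdvd_s := dvd_weightedSum hp.pos hN hd
  let δ i : ℤ := (Sr i / (p ^ f - 1) : ℕ) - (Ss i / (p ^ f - 1) : ℕ)
  have hδ : ∀ i, p * δ (i - 1) = δ i + r i - s i := fun i => by
    have hr := congrArg (Nat.cast : ℕ → ℤ) (mul_weightedSum_div_sub_one hp.one_lt hdvd_r i)
    have hs := congrArg (Nat.cast : ℕ → ℤ) (mul_weightedSum_div_sub_one hp.one_lt hdvd_s i)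
    simp only [Nat.cast_mul, Nat.cast_add] at hr hs
    simp only [δ, hSr, hSs]
    linear_combination hr - hs
  refine ⟨⟨hSr ▸ hdvd_r, hSs ▸ hdvd_s⟩,
    (Submodule.rank_mono inf_le_right).trans
      (rank_ker_delMap_le_one hp.one_lt (fun i => (a i).ne_zero) hδ), ?_⟩
  rw [goodTuples_inf_ker_delMap_ne_bot_iff hp.one_lt (fun i => by rw [mul_sub, hc, hd]; ring) hδ]
  refine and_congr_right' (and_congr (forall_congr' fun i => Int.sub_nonneg.trans Int.ofNat_le) ?_)
  simp only [δ, Int.cast_sub, Int.cast_natCast]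
  constructor <;> intro h <;> linear_combination -h

/-- (a) For every `i`, `p^f - 1` divides `Σ_{j=1}^{f} p^{f-j} r_{i+j}` (and likewise for `s`),
so that `α_i(r) := (Σ_{j=1}^{f} p^{f-j} r_{i+j})/(p^f - 1)` is an integer, and likewise `α_i(s)`;
(b) `dim_F ker ∂ ≤ 1`; and (c) `ker ∂ ≠ 0` if and only if `∏ a_i = ∏ b_i`,
`α_i(r) ≥ α_i(s)` for all `i`, and `c_0 - α_0(r) = d_0 - α_0(s)` in `ℤ/Nℤ`.
Here `ker ∂` is the space of homomorphisms `M(r,a,c) → M(s,b,d)` of rank one Breuil–Kisin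
modules with tame descent data. -/
theorem hom_rank_one_criterion
    (p f f' : ℕ) (hp : p.Prime) [NeZero f] (hf' : 0 < f') (hff' : f ∣ f')
    (F : Type*) [Field F] [Fintype F] [CharP F p]
    (a b : ZMod f → Fˣ) (r s : ZMod f → ℕ)
    (c d : ZMod f → ZMod (p ^ f' - 1))
    (hc : ∀ i, (p : ZMod (p ^ f' - 1)) * c (i - 1) = c i + (r i : ZMod (p ^ f' - 1)))
    (hd : ∀ i, (p : ZMod (p ^ f' - 1)) * d (i - 1) = d i + (s i : ZMod (p ^ f' - 1))) :
    let N := p ^ f' - 1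
    let C0 := goodTuples F f N fun i => c i - d i
    let D := delMap F p f (fun i => (a i : F)) (fun i => (b i : F)) r s
    let Sr : ZMod f → ℕ := fun i =>
      ∑ j ∈ Finset.range f, p ^ (f - 1 - j) * r (i + ((j + 1 : ℕ) : ZMod f))
    let Ss : ZMod f → ℕ := fun i =>
      ∑ j ∈ Finset.range f, p ^ (f - 1 - j) * s (i + ((j + 1 : ℕ) : ZMod f))
    ((∀ i, (p ^ f - 1) ∣ Sr i) ∧ (∀ i, (p ^ f - 1) ∣ Ss i)) ∧
    Module.rank F ↥(C0 ⊓ LinearMap.ker D) ≤ 1 ∧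
    (C0 ⊓ LinearMap.ker D ≠ ⊥ ↔
      ((∏ i : ZMod f, (a i : F)) = ∏ i : ZMod f, (b i : F)) ∧
      (∀ i, Ss i / (p ^ f - 1) ≤ Sr i / (p ^ f - 1)) ∧
      c 0 - ((Sr 0 / (p ^ f - 1) : ℕ) : ZMod N) =
        d 0 - ((Ss 0 / (p ^ f - 1) : ℕ) : ZMod N)) :=
  hom_rank_one_criterion_general p f f' hp hff' F a b r s c d hc hd
end

section
/- dim_F H = #{ i ∈ T : [d_{i−1} − c_{i−1}] < p^{f'−1} }. (This is the computation, for a pair of rank one Breuil–Kisin modules with tame descent data of maximal refined shape, of the dimension of Hom(M, N[1/u]/N): it equals the number of transitions (i−1, i) for which the invariant γ*_i vanishes.) -/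
noncomputable section

/-- The submodule `F[[u]]` of the field of Laurent series `F((u))`, consisting of series with no
terms of negative degree. -/
def intPart (F : Type*) [Field F] : Submodule F (LaurentSeries F) where
  carrier := { x | ∀ n : ℤ, n < 0 → x.coeff n = 0 }
  zero_mem' := by intro n _; simp
  add_mem' := by
    intro x y hx hy n hn
    simp [HahnSeries.coeff_add, hx n hn, hy n hn]
  smul_mem' := by
    intro t x hx n hn
    simp [HahnSeries.coeff_smul, hx n hn]

/-- Substitution of `u^p` for `u` on Laurent series. -/
def substLaurent (F : Type*) [Field F] (p : ℕ) (hp : 0 < p) (x : LaurentSeries F) :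
    LaurentSeries F :=
  HahnSeries.embDomain
    (OrderEmbedding.ofStrictMono (fun n : ℤ => (p : ℤ) * n)
      (fun _ _ h => mul_lt_mul_of_pos_left h (by exact_mod_cast hp))) x

theorem substLaurent_zero (F : Type*) [Field F] (p : ℕ) (hp : 0 < p) :
    substLaurent F p hp 0 = 0 :=
  HahnSeries.embDomain_zero

theorem substLaurent_add (F : Type*) [Field F] (p : ℕ) (hp : 0 < p) (x y : LaurentSeries F) :
    substLaurent F p hp (x + y) = substLaurent F p hp x + substLaurent F p hp y :=
  HahnSeries.embDomain_add _ _ _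

theorem substLaurent_smul (F : Type*) [Field F] (p : ℕ) (hp : 0 < p) (t : F)
    (x : LaurentSeries F) :
    substLaurent F p hp (t • x) = t • substLaurent F p hp x :=
  HahnSeries.embDomain_smul _ _ _

/-- The space `H` of tuples `(μ_i)` of elements of `F((u))/F[[u]]` such that each `μ_i` is
represented by a Laurent series all of whose nonzero terms have degree congruent to
`c_i - d_i mod N`, and such that `a_i u^{r_i} μ_i = b_i u^{s_i} μ_{i-1}(u^p)` in
`F((u))/F[[u]]` for every `i`.  It computes `Hom(M(r,a,c), M(s,b,d)[1/u]/M(s,b,d))` for rank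
one Breuil–Kisin modules with tame descent data. -/
def Hspace (F : Type*) [Field F] (p : ℕ) (hp : 0 < p) (f N : ℕ)
    (a b : ZMod f → F) (r s : ZMod f → ℕ) (c d : ZMod f → ZMod N) :
    Submodule F (ZMod f → (LaurentSeries F ⧸ intPart F)) where
  carrier := { μ | ∃ x : ZMod f → LaurentSeries F,
      (∀ i, (Submodule.Quotient.mk (x i) : LaurentSeries F ⧸ intPart F) = μ i) ∧
      (∀ i (n : ℤ), (x i).coeff n ≠ 0 → (n : ZMod N) = c i - d i) ∧
      (∀ i, a i • ((HahnSeries.single (1 : ℤ) (1 : F)) ^ r i * x i)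
          - b i • ((HahnSeries.single (1 : ℤ) (1 : F)) ^ s i * substLaurent F p hp (x (i - 1)))
          ∈ intPart F) }
  zero_mem' := by
    refine ⟨0, fun i => by simp, fun i n h => absurd (by simp) h, fun i => by
      simp [substLaurent_zero]⟩
  add_mem' := by
    rintro μ ν ⟨x, hx1, hx2, hx3⟩ ⟨y, hy1, hy2, hy3⟩
    refine ⟨x + y, fun i => ?_, fun i n h => ?_, fun i => ?_⟩
    · simp [Submodule.Quotient.mk_add, hx1 i, hy1 i]
    · by_cases h1 : (x i).coeff n = 0
      · refine hy2 i n fun h2 => h ?_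
        simp [HahnSeries.coeff_add, h1, h2]
      · exact hx2 i n h1
    · have heq : a i • ((HahnSeries.single (1 : ℤ) (1 : F)) ^ r i * (x + y) i)
          - b i • ((HahnSeries.single (1 : ℤ) (1 : F)) ^ s i *
              substLaurent F p hp ((x + y) (i - 1)))
          = (a i • ((HahnSeries.single (1 : ℤ) (1 : F)) ^ r i * x i)
              - b i • ((HahnSeries.single (1 : ℤ) (1 : F)) ^ s i *
                  substLaurent F p hp (x (i - 1))))
            + (a i • ((HahnSeries.single (1 : ℤ) (1 : F)) ^ r i * y i)
              - b i • ((HahnSeries.single (1 : ℤ) (1 : F)) ^ s i *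
                  substLaurent F p hp (y (i - 1)))) := by
        simp only [Pi.add_apply, substLaurent_add, mul_add, smul_add]
        abel
      rw [heq]
      exact add_mem (hx3 i) (hy3 i)
  smul_mem' := by
    rintro t μ ⟨x, hx1, hx2, hx3⟩
    refine ⟨t • x, fun i => ?_, fun i n h => ?_, fun i => ?_⟩
    · simp [Submodule.Quotient.mk_smul, hx1 i]
    · refine hx2 i n fun h0 => h ?_
      simp [HahnSeries.coeff_smul, h0]
    · have heq : a i • ((HahnSeries.single (1 : ℤ) (1 : F)) ^ r i * (t • x) i)
          - b i • ((HahnSeries.single (1 : ℤ) (1 : F)) ^ s i *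
              substLaurent F p hp ((t • x) (i - 1)))
          = t • (a i • ((HahnSeries.single (1 : ℤ) (1 : F)) ^ r i * x i)
              - b i • ((HahnSeries.single (1 : ℤ) (1 : F)) ^ s i *
                  substLaurent F p hp (x (i - 1)))) := by
        simp only [Pi.smul_apply, substLaurent_smul]
        simp only [← HahnSeries.single_zero_mul_eq_smul]
        ring
      rw [heq]
      exact Submodule.smul_mem _ _ (hx3 i)

end

/-!
Write `γ_i = [c_i - d_i]`. A representative `x_i` of `μ_i` has its polar terms in degrees
`≡ γ_i mod N`. The defining relation sends a term `u^m` of `x_i` with `p m + s_{i+1} < 0` to a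
nonzero term of `x_{i+1}` in degree `p m + s_{i+1} - r_{i+1}`. If `m ≤ -N` this degree is smaller
than `m`, so starting from a term of minimal degree shows that no `x_i` has terms of degree `≤ -N`;
hence the only possible polar term of `x_i` is `u^{γ_i - N}`, and since `r_{i+1} ≥ N - γ_{i+1}`
it cannot propagate, i.e. it requires `p (γ_i - N) + s_{i+1} ≥ 0`. Conversely each such term spans
a copy of `F` in `H`. For maximal refined shape the inequality holds exactly at transitions
`i + 1 ∈ T` with `p [d_i - c_i] < N`.
-/

open HahnSeries

section LaurentSeries

variable {F : Type*} [Field F]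

theorem coeff_single_one_pow_mul (k : ℕ) (x : LaurentSeries F) (n : ℤ) :
    (single (1 : ℤ) (1 : F) ^ k * x).coeff n = x.coeff (n - k) := by
  rw [single_pow, one_pow, nsmul_one, coeff_single_mul, one_mul]

variable {p : ℕ} (hp : 0 < p)

theorem coeff_substLaurent_mul (x : LaurentSeries F) (k : ℤ) :
    (substLaurent F p hp x).coeff (p * k) = x.coeff k :=
  embDomain_coeff (a := k)

theorem coeff_substLaurent_of_not_dvd (x : LaurentSeries F) {n : ℤ} (hn : ¬(p : ℤ) ∣ n) :
    (substLaurent F p hp x).coeff n = 0 :=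
  embDomain_of_notMem_range fun ⟨k, hk⟩ => hn ⟨k, hk.symm⟩

theorem coeff_relation (α β : F) (r s : ℕ) (x y : LaurentSeries F) (n : ℤ) :
    (α • (single (1 : ℤ) (1 : F) ^ r * x) - β • (single (1 : ℤ) (1 : F) ^ s *
      substLaurent F p hp y)).coeff n =
      α * x.coeff (n - r) - β * (substLaurent F p hp y).coeff (n - s) := by
  rw [coeff_sub, coeff_smul, coeff_smul, coeff_single_one_pow_mul, coeff_single_one_pow_mul,
    smul_eq_mul, smul_eq_mul]

theorem coeff_ne_zero_of_relation_mem_intPart {α β : F} {r s : ℕ} {x y : LaurentSeries F}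
    (hβ : β ≠ 0)
    (h : α • (single (1 : ℤ) (1 : F) ^ r * x) - β • (single (1 : ℤ) (1 : F) ^ s *
      substLaurent F p hp y) ∈ intPart F)
    {k : ℤ} (hk : p * k + s < 0) (hy : y.coeff k ≠ 0) : x.coeff (p * k + s - r) ≠ 0 := by
  intro hx
  have h0 := h _ hk
  rw [coeff_relation, add_sub_cancel_right, coeff_substLaurent_mul, hx, mul_zero, zero_sub,
    neg_eq_zero] at h0
  exact mul_ne_zero hβ hy h0

theorem relation_mem_intPart {α β : F} {r s : ℕ} {x y : LaurentSeries F}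
    (hx : ∀ n < 0, x.coeff (n - r) = 0) (hy : ∀ k : ℤ, p * k + s < 0 → y.coeff k = 0) :
    α • (single (1 : ℤ) (1 : F) ^ r * x) - β • (single (1 : ℤ) (1 : F) ^ s *
      substLaurent F p hp y) ∈ intPart F := by
  intro n hn
  rw [coeff_relation, hx n hn, mul_zero, zero_sub, neg_eq_zero]
  by_cases hdvd : (p : ℤ) ∣ n - s
  · obtain ⟨k, hk⟩ := hdvd
    rw [hk, coeff_substLaurent_mul, hy k (by omega), mul_zero]
  · rw [coeff_substLaurent_of_not_dvd hp y hdvd, mul_zero]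

variable (F) in
def quotientCoeff (m : ℤ) (hm : m < 0) : (LaurentSeries F ⧸ intPart F) →ₗ[F] F :=
  (intPart F).liftQ (coeff.linearMap m) fun _ hx => hx m hm

theorem quotientCoeff_mk {m : ℤ} (hm : m < 0) (x : LaurentSeries F) :
    quotientCoeff F m hm (Submodule.Quotient.mk x) = x.coeff m :=
  rfl

end LaurentSeries

section PoleDegree

variable {N : ℕ}

/-- The degree in `[-N, 0)` of class `z` modulo `N`. -/
def poleDegree (z : ZMod N) : ℤ :=
  z.val - N

theorem poleDegree_lt_zero [NeZero N] (z : ZMod N) : poleDegree z < 0 := by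
  have := z.val_lt
  unfold poleDegree
  omega

theorem intCast_poleDegree [NeZero N] (z : ZMod N) : ((poleDegree z : ℤ) : ZMod N) = z := by
  simp [poleDegree]

theorem eq_poleDegree [NeZero N] {m : ℤ} {z : ZMod N} (hlo : -N < m) (hhi : m < 0)
    (hz : (m : ZMod N) = z) : m = poleDegree z := by
  have hval : ((z.val : ℕ) : ℤ) = m % N := by rw [← hz, ZMod.val_intCast]
  have hmod : m % N = m + N := by
    rw [← Int.add_mul_emod_self_right m 1 N, one_mul]
    exact Int.emod_eq_of_lt (by omega) (by omega)
  unfold poleDegree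
  omega

theorem poleDegree_neg [NeZero N] {z : ZMod N} (hz : z ≠ 0) : poleDegree (-z) = -z.val := by
  have := z.val_lt
  rw [poleDegree, ZMod.neg_val, if_neg hz]
  omega

end PoleDegree

namespace Hspace

variable {F : Type*} [Field F] {p : ℕ} (hp : 0 < p) {f N : ℕ}
  {a b : ZMod f → F} {r s : ZMod f → ℕ} {c d : ZMod f → ZMod N}

variable (a b r s) in
def SatisfiesRelation (x : ZMod f → LaurentSeries F) : Prop :=
  ∀ i, a i • (single (1 : ℤ) (1 : F) ^ r i * x i) -
    b i • (single (1 : ℤ) (1 : F) ^ s i * substLaurent F p hp (x (i - 1))) ∈ intPart F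

variable (c d) in
def HasCongruentDegrees (x : ZMod f → LaurentSeries F) : Prop :=
  ∀ i (n : ℤ), (x i).coeff n ≠ 0 → (n : ZMod N) = c i - d i

theorem coeff_succ_ne_zero (hb : ∀ i, b i ≠ 0) {x : ZMod f → LaurentSeries F}
    (hx : SatisfiesRelation hp a b r s x) {i : ZMod f} {k : ℤ} (hk : p * k + s (i + 1) < 0)
    (hne : (x i).coeff k ≠ 0) : (x (i + 1)).coeff (p * k + s (i + 1) - r (i + 1)) ≠ 0 := by
  have h := hx (i + 1)
  rw [add_sub_cancel_right] at h
  exact coeff_ne_zero_of_relation_mem_intPart hp (hb (i + 1)) h hk hne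

variable [NeZero f]

theorem coeff_eq_zero_of_le_neg (hp2 : 2 ≤ p) (hs : ∀ i, s i < N) (hb : ∀ i, b i ≠ 0)
    {x : ZMod f → LaurentSeries F} (hx : SatisfiesRelation hp a b r s x) (i : ZMod f) {m : ℤ}
    (hm : m ≤ -N) : (x i).coeff m = 0 := by
  by_contra hne
  obtain ⟨i₀, -, hmin⟩ :=
    Finset.univ.exists_min_image (fun i => (x i).order) Finset.univ_nonempty
  have hm₀ : (x i₀).order ≤ m :=
    (hmin i (Finset.mem_univ _)).trans (order_le_of_coeff_ne_zero hne)
  have hx₀ : x i₀ ≠ 0 := by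
    rintro h
    have := hs i
    rw [h, order_zero] at hm₀
    omega
  have hpm₀ : (p : ℤ) * (x i₀).order ≤ 2 * (x i₀).order :=
    mul_le_mul_of_nonpos_right (by exact_mod_cast hp2) (by omega)
  have hs₁ := hs (i₀ + 1)
  have hnext := coeff_succ_ne_zero hp hb hx (by omega) (coeff_order_eq_zero.not.mpr hx₀)
  have := (hmin (i₀ + 1) (Finset.mem_univ _)).trans (order_le_of_coeff_ne_zero hnext)
  omega

theorem eq_poleDegree_of_coeff_ne_zero (hp2 : 2 ≤ p) (hs : ∀ i, s i < N) (hb : ∀ i, b i ≠ 0)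
    {x : ZMod f → LaurentSeries F} (hx : SatisfiesRelation hp a b r s x)
    (hdeg : HasCongruentDegrees c d x)
    {i : ZMod f} {m : ℤ} (hm : m < 0) (hne : (x i).coeff m ≠ 0) :
    m = poleDegree (c i - d i) := by
  have : NeZero N := ⟨(Nat.zero_le _).trans_lt (hs 0) |>.ne'⟩
  refine eq_poleDegree ?_ hm (hdeg i m hne)
  by_contra hle
  exact hne (coeff_eq_zero_of_le_neg hp hp2 hs hb hx i (by omega))

variable (p s c d) in
/-- The indices `j` at which the only admissible pole `u^{poleDegree (c_{j-1} - d_{j-1})}` of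
`μ_{j-1}` is sent into `F[[u]]` by `u^{s_j} · (-)(u^p)`. -/
def freeIndices : Finset (ZMod f) :=
  Finset.univ.filter fun j => 0 ≤ p * poleDegree (c (j - 1) - d (j - 1)) + s j

theorem succ_mem_freeIndices (hp2 : 2 ≤ p) (hs : ∀ i, s i < N)
    (hr : ∀ i, N ≤ r i + (c i - d i).val) (hb : ∀ i, b i ≠ 0)
    {x : ZMod f → LaurentSeries F} (hx : SatisfiesRelation hp a b r s x)
    (hdeg : HasCongruentDegrees c d x)
    {i : ZMod f} {m : ℤ} (hm : m < 0) (hne : (x i).coeff m ≠ 0) :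
    i + 1 ∈ freeIndices p s c d := by
  rw [freeIndices, Finset.mem_filter, add_sub_cancel_right,
    ← eq_poleDegree_of_coeff_ne_zero hp hp2 hs hb hx hdeg hm hne]
  refine ⟨Finset.mem_univ _, not_lt.mp fun hk => ?_⟩
  have hnext := coeff_succ_ne_zero hp hb hx hk hne
  have hpole := eq_poleDegree_of_coeff_ne_zero hp hp2 hs hb hx hdeg (by omega) hnext
  have := hr (i + 1)
  rw [poleDegree] at hpole
  omega

variable [NeZero N]

variable (a b r s c d) in
def poleCoeffs : Hspace F p hp f N a b r s c d →ₗ[F] (freeIndices p s c d → F) :=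
  LinearMap.pi fun j => (quotientCoeff F _ (poleDegree_lt_zero (c (j.1 - 1) - d (j.1 - 1)))).comp
    ((LinearMap.proj (j.1 - 1)).comp (Submodule.subtype _))

theorem poleCoeffs_injective (hp2 : 2 ≤ p) (hs : ∀ i, s i < N)
    (hr : ∀ i, N ≤ r i + (c i - d i).val) (hb : ∀ i, b i ≠ 0) :
    Function.Injective (poleCoeffs hp a b r s c d) := by
  rw [injective_iff_map_eq_zero]
  rintro ⟨μ, hμ_mem⟩ hzero
  obtain ⟨x, hμ, hdeg, hx⟩ := hμ_mem
  refine Subtype.ext (funext fun i => ?_)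
  change μ i = 0
  rw [← hμ i, Submodule.Quotient.mk_eq_zero]
  intro m hm
  by_contra hne
  have hj := succ_mem_freeIndices hp hp2 hs hr hb hx hdeg hm hne
  have hcoeff := congr_fun hzero ⟨i + 1, hj⟩
  simp only [poleCoeffs, LinearMap.pi_apply, LinearMap.comp_apply, LinearMap.proj_apply,
    Submodule.subtype_apply, add_sub_cancel_right, ← hμ i, quotientCoeff_mk] at hcoeff
  rw [← eq_poleDegree_of_coeff_ne_zero hp hp2 hs hb hx hdeg hm hne] at hcoeff
  exact hne hcoeff

theorem poleCoeffs_surjective (hr : ∀ i, N ≤ r i + (c i - d i).val) :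
    Function.Surjective (poleCoeffs hp a b r s c d) := by
  classical
  intro v
  let x : ZMod f → LaurentSeries F := fun i =>
    if h : i + 1 ∈ freeIndices p s c d then single (poleDegree (c i - d i)) (v ⟨i + 1, h⟩)
    else 0
  have hx_coeff : ∀ i n, (x i).coeff n ≠ 0 → n = poleDegree (c i - d i) := by
    intro i n hn
    by_contra hne
    refine hn ?_
    simp only [x]
    split_ifs
    · exact coeff_single_of_ne hne
    · rfl
  have hdeg : HasCongruentDegrees c d x := fun i n hn => by
    rw [hx_coeff i n hn, intCast_poleDegree]
  have hx : SatisfiesRelation hp a b r s x := by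
    intro i
    refine relation_mem_intPart hp (fun n hn => ?_) (fun k hk => ?_)
    · by_contra hne
      have hpole := hx_coeff i _ hne
      have := hr i
      rw [poleDegree] at hpole
      omega
    · by_contra hne
      have hk' := hx_coeff _ _ hne
      have hfree : i - 1 + 1 ∈ freeIndices p s c d := by
        by_contra hnot
        exact hne (by simp only [x, dif_neg hnot, coeff_zero])
      rw [sub_add_cancel, freeIndices, Finset.mem_filter, ← hk'] at hfree
      omega
  refine ⟨⟨fun i => Submodule.Quotient.mk (x i), x, fun _ => rfl, hdeg, hx⟩,
    funext fun j => ?_⟩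
  have hj : j.1 - 1 + 1 ∈ freeIndices p s c d := by rw [sub_add_cancel]; exact j.2
  simp only [poleCoeffs, LinearMap.pi_apply, LinearMap.comp_apply, LinearMap.proj_apply,
    Submodule.subtype_apply, quotientCoeff_mk, x, dif_pos hj, coeff_single_same]
  exact congrArg v (Subtype.ext (sub_add_cancel j.1 1))

theorem finiteDimensional_and_finrank_eq (hp2 : 2 ≤ p) (hs : ∀ i, s i < N)
    (hr : ∀ i, N ≤ r i + (c i - d i).val) (hb : ∀ i, b i ≠ 0) :
    FiniteDimensional F (Hspace F p hp f N a b r s c d) ∧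
      Module.finrank F (Hspace F p hp f N a b r s c d) = (freeIndices p s c d).card := by
  let e := LinearEquiv.ofBijective (poleCoeffs hp a b r s c d)
    ⟨poleCoeffs_injective hp hp2 hs hr hb, poleCoeffs_surjective hp hr⟩
  exact ⟨Module.Finite.equiv e.symm, by
    rw [e.finrank_eq, Module.finrank_fintype_fun_eq_card, Fintype.card_coe]⟩

end Hspace

section Transitions

theorem le_mod_iff_lt {a N : ℕ} (hN : 0 < N) : a ≤ a % N ↔ a < N := by
  refine ⟨fun h => ?_, fun h => (Nat.mod_eq_of_lt h).ge⟩
  by_contra hle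
  have := Nat.mod_lt a hN
  omega

theorem mul_lt_pow_sub_one_iff {p k δ : ℕ} (hp : 2 ≤ p) (hk : 0 < k) :
    p * δ < p ^ k - 1 ↔ δ < p ^ (k - 1) := by
  have hpow : p ^ k = p * p ^ (k - 1) := by rw [← pow_succ', Nat.sub_add_cancel hk]
  rw [hpow]
  constructor
  · intro h
    by_contra hle
    have := Nat.mul_le_mul_left p (not_lt.mp hle)
    omega
  · intro h
    have := Nat.mul_le_mul_left p (Nat.succ_le_of_lt h)
    rw [Nat.mul_succ] at this
    omega

theorem transition_free_iff {p k : ℕ} (hp : 2 ≤ p) (hk : 0 < k) [NeZero (p ^ k - 1)]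
    {z w : ZMod (p ^ k - 1)} (hw : w = p * z) (hw0 : w ≠ 0) :
    0 ≤ (p : ℤ) * poleDegree (-z) + ((p ^ k - 1 - (-w).val : ℕ) : ℤ) ↔
      z.val < p ^ (k - 1) := by
  have hz : z ≠ 0 := by rintro rfl; exact hw0 (by rw [hw, mul_zero])
  have hwval : w.val = p * z.val % (p ^ k - 1) := by
    rw [show w = ((p * z.val : ℕ) : ZMod (p ^ k - 1)) by
      rw [hw, Nat.cast_mul, ZMod.natCast_zmod_val], ZMod.val_natCast]
  rw [poleDegree_neg hz, ZMod.neg_val, if_neg hw0, Nat.sub_sub_self w.val_lt.le,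
    ← mul_lt_pow_sub_one_iff hp hk, ← le_mod_iff_lt (Nat.pos_of_neZero _), ← hwval, mul_neg]
  omega

theorem mem_freeIndices_iff_of_transitions {p f k : ℕ} [NeZero f] (hp : 2 ≤ p) (hk : 0 < k)
    {c d : ZMod f → ZMod (p ^ k - 1)} {T : Finset (ZMod f)}
    (ht : ∀ i ∈ T, (p : ZMod (p ^ k - 1)) * c (i - 1) = d i ∧
      (p : ZMod (p ^ k - 1)) * d (i - 1) = c i ∧ c i ≠ d i) (j : ZMod f) :
    j ∈ Hspace.freeIndices p (fun i => if i ∈ T then p ^ k - 1 - (d i - c i).val else 0) c d ↔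
      j ∈ T ∧ (d (j - 1) - c (j - 1)).val < p ^ (k - 1) := by
  have : NeZero (p ^ k - 1) := ⟨(Nat.sub_pos_of_lt (Nat.one_lt_pow hk.ne' hp)).ne'⟩
  simp only [Hspace.freeIndices, Finset.mem_filter, Finset.mem_univ, true_and]
  by_cases hj : j ∈ T
  · obtain ⟨hd, hc, hne⟩ := ht j hj
    have hw : c j - d j = p * (d (j - 1) - c (j - 1)) := by rw [mul_sub, hd, hc]
    rw [if_pos hj, ← neg_sub (d (j - 1)), ← neg_sub (c j),
      transition_free_iff hp hk hw (sub_ne_zero.mpr hne)]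
    exact (and_iff_right hj).symm
  · rw [if_neg hj, Nat.cast_zero, add_zero, iff_false_intro hj, false_and, iff_false, not_le]
    exact mul_neg_of_pos_of_neg (by omega) (poleDegree_lt_zero _)

end Transitions

theorem hom_to_quotient_dimension_general
    (p f f' e : ℕ) (hp : p.Prime) [NeZero f] (hf' : 0 < f') (he : 0 < e)
    (F : Type*) [Field F]
    (a b : ZMod f → Fˣ) (c d : ZMod f → ZMod (p ^ f' - 1))
    (T : Finset (ZMod f))
    (ht : ∀ i, i ∈ T →
      (p : ZMod (p ^ f' - 1)) * c (i - 1) = d i ∧ (p : ZMod (p ^ f' - 1)) * d (i - 1) = c i ∧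
        c i ≠ d i) :
    let N := p ^ f' - 1
    let r : ZMod f → ℕ := fun i => if i ∈ T then N * e - (c i - d i).val else N * e
    let s : ZMod f → ℕ := fun i => if i ∈ T then N - (d i - c i).val else 0
    let H := Hspace F p hp.pos f N (fun i => (a i : F)) (fun i => (b i : F)) r s c d
    FiniteDimensional F ↥H ∧
    Module.finrank F ↥H =
      (T.filter fun i => (d (i - 1) - c (i - 1)).val < p ^ (f' - 1)).card := by
  intro N r s H
  have : NeZero N := ⟨(Nat.sub_pos_of_lt (Nat.one_lt_pow hf'.ne' hp.one_lt)).ne'⟩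
  have hs : ∀ i, s i < N := fun i => by
    have := Nat.pos_of_neZero N
    by_cases hi : i ∈ T
    · have := (ZMod.val_ne_zero _).mpr (sub_ne_zero.mpr (ht i hi).2.2.symm)
      simp only [s, if_pos hi]
      omega
    · simpa only [s, if_neg hi]
  have hr : ∀ i, N ≤ r i + (c i - d i).val := fun i => by
    have := (c i - d i).val_lt
    have := Nat.le_mul_of_pos_right N he
    simp only [r]
    split_ifs <;> omega
  obtain ⟨hfin, hrank⟩ := Hspace.finiteDimensional_and_finrank_eq hp.pos hp.two_le hs hr
    (fun i => (b i).ne_zero)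
  refine ⟨hfin, hrank.trans (congrArg Finset.card (Finset.ext fun j => ?_))⟩
  rw [mem_freeIndices_iff_of_transitions hp.two_le hf' ht, Finset.mem_filter]

/-- For a pair of rank one Breuil–Kisin modules with tame descent data of maximal refined shape
(with set of transitions `T`), the dimension of `H = Hom(M, N[1/u]/N)` equals the number of
transitions `(i-1, i)` for which `[d_{i-1} - c_{i-1}] < p^{f'-1}` (i.e. for which the invariant
`γ*_i` vanishes). -/
theorem hom_to_quotient_dimension
    (p f f' e : ℕ) (hp : p.Prime) [NeZero f] (hf' : 0 < f') (hff' : f ∣ f') (he : 0 < e)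
    (F : Type*) [Field F] [Fintype F] [CharP F p]
    (a b : ZMod f → Fˣ) (c d : ZMod f → ZMod (p ^ f' - 1))
    (T : Finset (ZMod f))
    (hnt : ∀ i, i ∉ T →
      (p : ZMod (p ^ f' - 1)) * c (i - 1) = c i ∧ (p : ZMod (p ^ f' - 1)) * d (i - 1) = d i)
    (ht : ∀ i, i ∈ T →
      (p : ZMod (p ^ f' - 1)) * c (i - 1) = d i ∧ (p : ZMod (p ^ f' - 1)) * d (i - 1) = c i ∧
        c i ≠ d i) :
    let N := p ^ f' - 1
    let r : ZMod f → ℕ := fun i => if i ∈ T then N * e - (c i - d i).val else N * e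
    let s : ZMod f → ℕ := fun i => if i ∈ T then N - (d i - c i).val else 0
    let H := Hspace F p hp.pos f N (fun i => (a i : F)) (fun i => (b i : F)) r s c d
    FiniteDimensional F ↥H ∧
    Module.finrank F ↥H =
      (T.filter fun i => (d (i - 1) - c (i - 1)).val < p ^ (f' - 1)).card :=
  hom_to_quotient_dimension_general p f f' e hp hf' he F a b c d T ht
end

section
/- Assume e' := Ne for an integer e ≥ 1, and that 0 ≤ r_i ≤ e' and 0 ≤ s_i ≤ e' for all i. Then dim_F H ≤ ⌈e/(p−1)⌉ · f. (This is the explicit form of the bound dim kExt¹(M, N) ≤ ⌈e/(p−1)⌉f for rank one Breuil–Kisin modules of height at most one with tame descent data, since the kernel of the map from extensions of Breuil–Kisin modules to extensions of étale φ-modules embeds into H.) -/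
/-!
Let `x_i` represent `μ_i` and put `E = N e`. Comparing coefficients of `u^{p m + s_{i+1}}` in the
relation defining `H` gives `a_{i+1} x_{i+1}[p m + s_{i+1} - r_{i+1}] = b_{i+1} x_i[m]` whenever
`p m + s_{i+1} < 0`. So a nonzero coefficient `x_i[m]` with `(p - 1) m + E < 0` produces a nonzero
coefficient of `x_{i+1}` in a strictly smaller degree satisfying the same inequality; since the
supports are bounded below, there is no such coefficient. The principal part of `μ_i` therefore
lives in the negative degrees `n ≥ -E/(p - 1)` with `n ≡ c_i - d_i (mod N)`, of which there are at
most `⌈e/(p-1)⌉`, and reading off these coefficients embeds `H` into `F^{⌈e/(p-1)⌉ f}`.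
-/

theorem HahnSeries.bddBelow_setOf_exists_coeff_ne_zero {Γ R : Type*} [Zero Γ] [LinearOrder Γ]
    [Nonempty Γ] [Zero R] {ι : Type*} [Finite ι] (x : ι → HahnSeries Γ R) :
    BddBelow {n | ∃ i, (x i).coeff n ≠ 0} := by
  obtain ⟨B, hB⟩ := (Set.finite_range fun i => (x i).order).bddBelow
  exact ⟨B, fun n ⟨i, hi⟩ => (hB ⟨i, rfl⟩).trans (HahnSeries.order_le_of_coeff_ne_zero hi)⟩

theorem ZMod.exists_eq_neg_sub_val_add_mul {N : ℕ} [NeZero N] {c : ZMod N} {n : ℤ} (hn : n < 0)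
    (hc : (n : ZMod N) = c) : ∃ j : ℕ, n = -(((N - c.val : ℕ) : ℤ) + N * j) := by
  have hval : c.val < N := c.val_lt
  obtain ⟨z, hz⟩ : (N : ℤ) ∣ n + (N - c.val : ℕ) := by
    rw [← ZMod.intCast_zmod_eq_zero_iff_dvd]
    push_cast [Nat.cast_sub hval.le, hc]
    simp
  have hz : z ≤ 0 := by
    by_contra! h
    push_cast [Nat.cast_sub hval.le] at hz
    nlinarith
  exact ⟨(-z).toNat, by rw [Int.toNat_of_nonneg (by omega)]; linarith⟩

theorem Nat.lt_ceilDiv_of_mul_add_mul_le {q t N e j : ℕ} (hq : 0 < q) (ht : 0 < t)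
    (h : q * (t + N * j) ≤ N * e) : j < e ⌈/⌉ q := by
  have hqj : q * j < e := by
    refine Nat.lt_of_mul_lt_mul_left (a := N) ?_
    nlinarith [Nat.mul_pos hq ht]
  exact not_le.1 fun hle => ((ceilDiv_le_iff_le_mul hq).1 hle).not_gt hqj

theorem HahnSeries.coeff_single_one_pow_mul {R : Type*} [Semiring R] (r : ℕ)
    (y : LaurentSeries R) (n : ℤ) :
    ((HahnSeries.single (1 : ℤ) (1 : R)) ^ r * y).coeff n = y.coeff (n - r) := by
  rw [HahnSeries.single_pow, one_pow, HahnSeries.coeff_single_mul, one_mul, nsmul_one]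

section

variable {F : Type*} [Field F] {p : ℕ} (hp : 0 < p)

theorem substLaurent_coeff_mul (y : LaurentSeries F) (m : ℤ) :
    (substLaurent F p hp y).coeff (p * m) = y.coeff m :=
  HahnSeries.embDomain_coeff

variable (F) in
def principalCoeff (n : ℤ) (hn : n < 0) : (LaurentSeries F ⧸ intPart F) →ₗ[F] F :=
  (intPart F).liftQ (HahnSeries.coeff.linearMap n) fun _ hx => hx n hn

@[simp]
theorem principalCoeff_mk {n : ℤ} (hn : n < 0) (x : LaurentSeries F) :
    principalCoeff F n hn (Submodule.Quotient.mk x) = x.coeff n :=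
  rfl

theorem coeff_eq_of_sub_mem_intPart {a b : F} {r s : ℕ} {y z : LaurentSeries F}
    (h : a • (HahnSeries.single (1 : ℤ) (1 : F) ^ r * y)
      - b • (HahnSeries.single (1 : ℤ) (1 : F) ^ s * substLaurent F p hp z) ∈ intPart F)
    {m : ℤ} (hm : p * m + s < 0) : a * y.coeff (p * m + s - r) = b * z.coeff m := by
  have h := h _ hm
  rwa [HahnSeries.coeff_sub, HahnSeries.coeff_smul, HahnSeries.coeff_smul,
    HahnSeries.coeff_single_one_pow_mul, HahnSeries.coeff_single_one_pow_mul,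
    add_sub_cancel_right, substLaurent_coeff_mul, sub_eq_zero] at h

theorem coeff_eq_zero_of_sub_mem_intPart {ι : Type*} [AddGroupWithOne ι] [Finite ι] {a b : ι → F}
    (hb : ∀ i, b i ≠ 0) {r s : ι → ℕ} {E : ℕ} (hs : ∀ i, s i ≤ E) {x : ι → LaurentSeries F}
    (hx : ∀ i, a i • (HahnSeries.single (1 : ℤ) (1 : F) ^ r i * x i)
      - b i • (HahnSeries.single (1 : ℤ) (1 : F) ^ s i * substLaurent F p hp (x (i - 1)))
        ∈ intPart F)
    {i : ι} {m : ℤ} (hm : ((p : ℤ) - 1) * m + E < 0) : (x i).coeff m = 0 := by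
  by_contra hne
  obtain ⟨B, hB⟩ := HahnSeries.bddBelow_setOf_exists_coeff_ne_zero x
  obtain ⟨m₀, ⟨i₀, hne₀, hm₀⟩, hmin⟩ := Int.exists_least_of_bdd
    (P := fun m => ∃ i, (x i).coeff m ≠ 0 ∧ ((p : ℤ) - 1) * m + E < 0)
    ⟨B, fun n ⟨i, hi, _⟩ => hB ⟨i, hi⟩⟩ ⟨m, i, hne, hm⟩
  have hp1 : (1 : ℤ) ≤ p := by exact_mod_cast hp
  have hsE : (s (i₀ + 1) : ℤ) ≤ E := by exact_mod_cast hs (i₀ + 1)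
  have hm₀_neg : m₀ < 0 := by nlinarith
  set m₁ : ℤ := p * m₀ + s (i₀ + 1) - r (i₀ + 1)
  have hlt : m₁ < m₀ := by
    have : (0 : ℤ) ≤ r (i₀ + 1) := by positivity
    linarith
  have hne₁ : (x (i₀ + 1)).coeff m₁ ≠ 0 := by
    intro h0
    have h := coeff_eq_of_sub_mem_intPart hp (hx (i₀ + 1)) (m := m₀) (by linarith)
    rw [add_sub_cancel_right, h0, mul_zero] at h
    exact hne₀ ((mul_eq_zero.1 h.symm).resolve_left (hb _))
  have hm₁ : ((p : ℤ) - 1) * m₁ + E < 0 := by nlinarith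
  exact (hmin m₁ ⟨i₀ + 1, hne₁, hm₁⟩).not_gt hlt

end

theorem rank_Hspace_le {F : Type*} [Field F] {p f N e : ℕ} (hp : 1 < p) [NeZero f] [NeZero N]
    {a b : ZMod f → F} (hb : ∀ i, b i ≠ 0) {r s : ZMod f → ℕ} (c d : ZMod f → ZMod N)
    (hs : ∀ i, s i ≤ N * e) :
    Module.rank F (Hspace F p (Nat.zero_lt_of_lt hp) f N a b r s c d)
      ≤ (e ⌈/⌉ (p - 1) * f : ℕ) := by
  set K := e ⌈/⌉ (p - 1)
  -- `-(t i + N j)` with `j < K` are the negative degrees `≡ c i - d i` that can carry a coefficient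
  let t : ZMod f → ℕ := fun i => N - (c i - d i).val
  have ht : ∀ i, 0 < t i := fun i => Nat.sub_pos_of_lt (ZMod.val_lt _)
  let Φ : Hspace F p (Nat.zero_lt_of_lt hp) f N a b r s c d →ₗ[F] (ZMod f × Fin K → F) :=
    LinearMap.pi fun ij => principalCoeff F (-(t ij.1 + N * ij.2 : ℤ))
      (neg_neg_of_pos (add_pos_of_pos_of_nonneg (by exact_mod_cast ht ij.1) (by positivity)))
      ∘ₗ LinearMap.proj ij.1 ∘ₗ Submodule.subtype _
  have hΦ : Function.Injective Φ := by
    rw [← LinearMap.ker_eq_bot, LinearMap.ker_eq_bot']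
    rintro ⟨μ, x, hμ, hdeg, hx⟩ hΦμ
    refine Subtype.ext (funext fun i => ?_)
    show μ i = 0
    rw [← hμ i, Submodule.Quotient.mk_eq_zero]
    intro n hn
    by_contra hne
    have hbound : 0 ≤ ((p : ℤ) - 1) * n + (N * e : ℕ) :=
      not_lt.1 fun h => hne (coeff_eq_zero_of_sub_mem_intPart _ hb hs hx h)
    obtain ⟨j, rfl⟩ := ZMod.exists_eq_neg_sub_val_add_mul hn (hdeg i n hne)
    have hj : j < K := by
      refine Nat.lt_ceilDiv_of_mul_add_mul_le (N := N) (Nat.sub_pos_of_lt hp) (ht i) ?_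
      zify [hp.le, (ZMod.val_lt (c i - d i)).le, t] at hbound ⊢
      linarith
    exact hne (by simpa [Φ, t, ← hμ i] using congrFun hΦμ (i, ⟨j, hj⟩))
  calc Module.rank F (Hspace F p (Nat.zero_lt_of_lt hp) f N a b r s c d)
      ≤ Module.rank F (ZMod f × Fin K → F) := Φ.rank_le_of_injective hΦ
    _ = (K * f : ℕ) := by simp [mul_comm]

theorem ker_ext_dimension_bound_general
    (p f f' e : ℕ) (hp : p.Prime) [NeZero f] (hf' : 0 < f')
    (F : Type*) [Field F]
    (a b : ZMod f → Fˣ) (r s : ZMod f → ℕ)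
    (c d : ZMod f → ZMod (p ^ f' - 1))
    (hs : ∀ i, s i ≤ (p ^ f' - 1) * e) :
    Module.rank F
        ↥(Hspace F p hp.pos f (p ^ f' - 1) (fun i => (a i : F)) (fun i => (b i : F)) r s c d)
      ≤ ((e ⌈/⌉ (p - 1)) * f : ℕ) := by
  have : NeZero (p ^ f' - 1) := ⟨by have := Nat.one_lt_pow hf'.ne' hp.one_lt; omega⟩
  exact rank_Hspace_le hp.one_lt (fun i => (b i).ne_zero) c d hs

/-- If `e' = Ne` with `e ≥ 1` and `0 ≤ r_i, s_i ≤ e'` for all `i`, then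
`dim_F H ≤ ⌈e/(p-1)⌉ · f`.  This is the explicit form of the bound
`dim kExt¹(M, N) ≤ ⌈e/(p-1)⌉f` for rank one Breuil–Kisin modules of height at most one with
tame descent data, since the kernel of the map from extensions of Breuil–Kisin modules to
extensions of étale `φ`-modules embeds into `H = Hom(M, N[1/u]/N)`. -/
theorem ker_ext_dimension_bound
    (p f f' e : ℕ) (hp : p.Prime) [NeZero f] (hf' : 0 < f') (hff' : f ∣ f') (he : 1 ≤ e)
    (F : Type*) [Field F] [Fintype F] [CharP F p]
    (a b : ZMod f → Fˣ) (r s : ZMod f → ℕ)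
    (c d : ZMod f → ZMod (p ^ f' - 1))
    (hc : ∀ i, (p : ZMod (p ^ f' - 1)) * c (i - 1) = c i + (r i : ZMod (p ^ f' - 1)))
    (hd : ∀ i, (p : ZMod (p ^ f' - 1)) * d (i - 1) = d i + (s i : ZMod (p ^ f' - 1)))
    (hr : ∀ i, r i ≤ (p ^ f' - 1) * e) (hs : ∀ i, s i ≤ (p ^ f' - 1) * e) :
    Module.rank F
        ↥(Hspace F p hp.pos f (p ^ f' - 1) (fun i => (a i : F)) (fun i => (b i : F)) r s c d)
      ≤ ((e ⌈/⌉ (p - 1)) * f : ℕ) :=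
  ker_ext_dimension_bound_general p f f' e hp hf' F a b r s c d hs
end

section
/- For every J ∈ 𝒫 one has 0 ≤ t_J(i) ≤ p − 1 for all i ∈ ℤ/f'ℤ, and the values t_J(i) are not all equal to p − 1; moreover, the map J ↦ t_J is injective on 𝒫. (This is the combinatorial content of the fact that the Galois characters T(N(J)) attached to the irreducible components labelled by J ∈ 𝒫_τ are pairwise distinct.) -/
/-!
Comparing `t_J` and `t_K` at `j + 1` for `j ∈ J \ K`: there `t_K` vanishes, which forces
`j + 1 ∈ J` with `γ_{j+1} = 0`, and admissibility of `K` then rules out `j + 1 ∈ K`. So `J \ K`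
is stable under `j ↦ j + 1`; on the cycle `ℤ/f'ℤ` this gives `J = everything` and `K = ∅`,
whence `γ = t_J = t_K = 0`.
-/

variable {R : Type*} [AddGroupWithOne R] [DecidableEq R]

def admissibleSets (γ : R → ℤ) (c : ℤ) : Set (Finset R) :=
  { J | ∀ i : R, (i - 1 ∈ J → i ∉ J → γ i ≠ c) ∧ (i - 1 ∉ J → i ∈ J → γ i ≠ 0) }

def tJ (γ : R → ℤ) (J : Finset R) (i : R) : ℤ :=
  if i - 1 ∈ J then (if i ∈ J then γ i else γ i + 1) else 0

section Bounds

variable {γ : R → ℤ} {c : ℤ} {J : Finset R}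

theorem tJ_nonneg (hγ0 : ∀ i, 0 ≤ γ i) (J : Finset R) (i : R) : 0 ≤ tJ γ J i := by
  unfold tJ
  have := hγ0 i
  split_ifs <;> omega

theorem tJ_le (hγ0 : ∀ i, 0 ≤ γ i) (hγc : ∀ i, γ i ≤ c) (hJ : J ∈ admissibleSets γ c)
    (i : R) : tJ γ J i ≤ c := by
  unfold tJ
  have := hγ0 i
  have := hγc i
  split_ifs with h₁ h₂
  · exact hγc i
  · have := (hJ i).1 h₁ h₂
    omega
  · omega

theorem tJ_eq_of_forall_mem (hJ : ∀ i, i ∈ J) : tJ γ J = γ := by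
  funext i
  simp [tJ, hJ]

theorem tJ_add_one_of_notMem {i : R} (hi : i ∉ J) : tJ γ J (i + 1) = 0 := by
  simp [tJ, hi]

theorem not_forall_tJ_eq (hγ0 : ∀ i, 0 ≤ γ i) (hγc : ∀ i, γ i ≤ c)
    (hnotallc : ¬ ∀ i, γ i = c) : ¬ ∀ i, tJ γ J i = c := by
  intro hall
  by_cases hJ : ∀ i, i ∈ J
  · exact hnotallc (by simpa [tJ_eq_of_forall_mem hJ] using hall)
  · obtain ⟨i, hi⟩ := not_forall.1 hJ
    have hc : c = 0 := by rw [← hall (i + 1), tJ_add_one_of_notMem hi]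
    exact hnotallc fun k => le_antisymm (hc ▸ hγc k) (hc ▸ hγ0 k)

end Bounds

section Injectivity

variable {γ : R → ℤ} {c : ℤ} {J K : Finset R}

theorem add_one_mem_sdiff_of_tJ_eq (hγ0 : ∀ i, 0 ≤ γ i) (hK : K ∈ admissibleSets γ c)
    (h : tJ γ J = tJ γ K) {j : R} (hj : j ∈ J \ K) : j + 1 ∈ J \ K := by
  rw [Finset.mem_sdiff] at hj ⊢
  have hjk := congrFun h (j + 1)
  have hK0 := (hK (j + 1)).2
  have := hγ0 (j + 1)
  simp only [tJ, add_sub_cancel_right, hj.1, hj.2, if_true, if_false] at hjk hK0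
  split_ifs at hjk with hJ1
  · exact ⟨hJ1, fun hK1 => hK0 not_false hK1 hjk⟩
  · omega

theorem add_natCast_mem_sdiff_of_tJ_eq (hγ0 : ∀ i, 0 ≤ γ i) (hK : K ∈ admissibleSets γ c)
    (h : tJ γ J = tJ γ K) {j : R} (hj : j ∈ J \ K) (n : ℕ) : j + n ∈ J \ K := by
  induction n with
  | zero => simpa using hj
  | succ n ih =>
    rw [Nat.cast_succ, ← add_assoc]
    exact add_one_mem_sdiff_of_tJ_eq hγ0 hK h ih

end Injectivity

theorem ZMod.subset_of_tJ_eq {n : ℕ} [NeZero n] {c : ℤ} {γ : ZMod n → ℤ} {J K : Finset (ZMod n)}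
    (hγ0 : ∀ i, 0 ≤ γ i) (hnotall0 : ¬ ∀ i, γ i = 0) (hK : K ∈ admissibleSets γ c)
    (h : tJ γ J = tJ γ K) : J ⊆ K := by
  intro j hjJ
  by_contra hjK
  have hall : ∀ i, i ∈ J \ K := fun i => by
    obtain ⟨m, hm⟩ := ZMod.natCast_zmod_surjective (i - j)
    simpa [hm] using add_natCast_mem_sdiff_of_tJ_eq hγ0 hK h (Finset.mem_sdiff.2 ⟨hjJ, hjK⟩) m
  rw [tJ_eq_of_forall_mem fun k => (Finset.mem_sdiff.1 (hall k)).1] at h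
  refine hnotall0 fun i => ?_
  rw [congrFun h i, ← sub_add_cancel i 1]
  exact tJ_add_one_of_notMem (Finset.mem_sdiff.1 (hall (i - 1))).2

theorem tJ_injective_on_P_general (p f' : ℕ) (hf' : 0 < f')
    (γ : ZMod f' → ℤ)
    (hγ0 : ∀ i, 0 ≤ γ i) (hγp : ∀ i, γ i ≤ (p : ℤ) - 1)
    (hnotallp : ¬ ∀ i, γ i = (p : ℤ) - 1) (hnotall0 : ¬ ∀ i, γ i = 0) :
    let P : Set (Finset (ZMod f')) := { J | ∀ i : ZMod f',
      (i - 1 ∈ J → i ∉ J → γ i ≠ (p : ℤ) - 1) ∧ (i - 1 ∉ J → i ∈ J → γ i ≠ 0) }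
    let t : Finset (ZMod f') → ZMod f' → ℤ := fun J i =>
      if i - 1 ∈ J then (if i ∈ J then γ i else γ i + 1) else 0
    (∀ J ∈ P, ∀ i, 0 ≤ t J i ∧ t J i ≤ (p : ℤ) - 1) ∧
    (∀ J ∈ P, ¬ ∀ i, t J i = (p : ℤ) - 1) ∧
    Set.InjOn t P := by
  have : NeZero f' := ⟨hf'.ne'⟩
  refine ⟨fun J hJ i => ⟨tJ_nonneg hγ0 J i, tJ_le hγ0 hγp hJ i⟩,
    fun J _ => not_forall_tJ_eq hγ0 hγp hnotallp, fun J hJ K hK h => ?_⟩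
  exact (ZMod.subset_of_tJ_eq hγ0 hnotall0 hK h).antisymm
    (ZMod.subset_of_tJ_eq hγ0 hnotall0 hJ h.symm)

/-- The combinatorial content of the fact that the Galois characters `T(N(J))` attached to the
irreducible components labelled by `J ∈ 𝒫_τ` are pairwise distinct: for a non-scalar tame type
with exponents `γ`, the tuples `t_J` for `J ∈ 𝒫` take values in `[0, p-1]`, are never identically
`p - 1`, and the assignment `J ↦ t_J` is injective on `𝒫`. -/
theorem tJ_injective_on_P (p f' : ℕ) (hp : p.Prime) (hf' : 0 < f')
    (γ : ZMod f' → ℤ)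
    (hγ0 : ∀ i, 0 ≤ γ i) (hγp : ∀ i, γ i ≤ (p : ℤ) - 1)
    (hnotallp : ¬ ∀ i, γ i = (p : ℤ) - 1) (hnotall0 : ¬ ∀ i, γ i = 0) :
    let P : Set (Finset (ZMod f')) := { J | ∀ i : ZMod f',
      (i - 1 ∈ J → i ∉ J → γ i ≠ (p : ℤ) - 1) ∧ (i - 1 ∉ J → i ∈ J → γ i ≠ 0) }
    let t : Finset (ZMod f') → ZMod f' → ℤ := fun J i =>
      if i - 1 ∈ J then (if i ∈ J then γ i else γ i + 1) else 0
    (∀ J ∈ P, ∀ i, 0 ≤ t J i ∧ t J i ≤ (p : ℤ) - 1) ∧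
    (∀ J ∈ P, ¬ ∀ i, t J i = (p : ℤ) - 1) ∧
    Set.InjOn t P :=
  tJ_injective_on_P_general p f' hf' γ hγ0 hγp hnotallp hnotall0
end

section
/- The fixed subring { x ∈ R : φ(x) = x } is exactly the image of Λ under the natural map Λ → R. (This is the key computation showing that the endomorphism ring of a rank one étale φ-module with Λ-coefficients and descent data is Λ.) -/
noncomputable section

open scoped TensorProduct

variable (p : ℕ) [Fact p.Prime]

/-- The canonical `𝔽_p = ZMod p` algebra structure on a field of characteristic `p`. -/
noncomputable instance charPAlgebra (k' : Type*) [CommRing k'] [CharP k' p] :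
    Algebra (ZMod p) k' :=
  (ZMod.castHom dvd_rfl k').toAlgebra

/-- The Frobenius `x ↦ x^p` of `k'` as a `ZMod p`-linear map. -/
def frobLin (k' : Type*) [Field k'] [CharP k' p] : k' →ₗ[ZMod p] k' where
  toFun x := x ^ p
  map_add' x y := add_pow_char x y p
  map_smul' t x := by
    simp only [RingHom.id_apply]
    rw [Algebra.smul_def, Algebra.smul_def, mul_pow, ← map_pow, ZMod.pow_card]

/-- The map `frobenius ⊗ id` on `k' ⊗_{𝔽_p} Λ`. -/
def frobTensor (k' : Type*) [Field k'] [CharP k' p] (Λ : Type*) [CommRing Λ]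
    [Algebra (ZMod p) Λ] :
    (k' ⊗[ZMod p] Λ) →ₗ[ZMod p] (k' ⊗[ZMod p] Λ) :=
  TensorProduct.map (frobLin p k') LinearMap.id

/-- The semilinear substitution `Σ a_n u^n ↦ Σ (frobenius ⊗ id)(a_n) u^{pn}` on
`(k' ⊗_{𝔽_p} Λ)[[u]]`: this is the restriction to `(k' ⊗ Λ)[[u]]` of the ring endomorphism
`φ` of `((k' ⊗ Λ)[[u]])[1/u]` which acts as the Frobenius `x ↦ x^p` on `k'`, as the identity
on `Λ`, and sends `u` to `u^p`. -/
def phiPS (k' : Type*) [Field k'] [CharP k' p] (Λ : Type*) [CommRing Λ] [Algebra (ZMod p) Λ]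
    (f : PowerSeries (k' ⊗[ZMod p] Λ)) : PowerSeries (k' ⊗[ZMod p] Λ) :=
  PowerSeries.mk fun n =>
    if p ∣ n then frobTensor p k' Λ ((PowerSeries.coeff (n / p)) f) else 0

/-! Write a fixed point as `x = f / uⁿ` with `f = Σ a_t uᵗ ∈ (k' ⊗ Λ)[[u]]`. Then
`φ f = u^((p-1)n) f`, i.e., with `F = frobenius ⊗ id`, `F a_q = a_t` when `t + (p-1)n = pq`
and `a_t = 0` when `p ∤ t + (p-1)n`. Since then `p (q - n) = t - n`, a nonzero `a_t` with
`t ≠ n` would produce nonzero coefficients at indices strictly closer to `n` without ever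
reaching it; hence `f = a_n uⁿ` with `F a_n = a_n`. Finally `𝔽_p → k' → k'` (inclusion, then
`x ↦ xᵖ - x`) is exact and stays exact after `⊗_{𝔽_p} Λ`, which puts `a_n` in `1 ⊗ Λ`. -/

open PowerSeries

section Frobenius

variable {p}
variable {K : Type*} [Field K] [CharP K p]

theorem pow_char_eq_self_iff {x : K} : x ^ p = x ↔ x ∈ Set.range (algebraMap (ZMod p) K) := by
  rw [← Subfield.mem_bot_iff_pow_eq_self K p, ← ZMod.fieldRange_castHom_eq_bot p]
  rfl

theorem exact_algebraMap_frobLin_sub_id :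
    Function.Exact (Algebra.linearMap (ZMod p) K)
      (frobLin p K - LinearMap.id (R := ZMod p) (M := K)) := fun x => by
  simp only [LinearMap.sub_apply, LinearMap.id_apply, sub_eq_zero]
  exact pow_char_eq_self_iff

variable {Λ : Type*} [CommRing Λ] [Algebra (ZMod p) Λ]

@[simp]
theorem frobTensor_tmul (x : K) (l : Λ) :
    frobTensor p K Λ (x ⊗ₜ[ZMod p] l) = (x ^ p) ⊗ₜ[ZMod p] l :=
  rfl

@[simp]
theorem frobTensor_one : frobTensor p K Λ 1 = 1 := by
  rw [Algebra.TensorProduct.one_def, frobTensor_tmul, one_pow]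

theorem frobTensor_eq_self_iff {c : K ⊗[ZMod p] Λ} :
    frobTensor p K Λ c = c ↔ ∃ l : Λ, c = 1 ⊗ₜ[ZMod p] l := by
  have hexact := Module.Flat.rTensor_exact Λ (exact_algebraMap_frobLin_sub_id (K := K))
  have hsub : (frobLin p K - LinearMap.id).rTensor Λ c = frobTensor p K Λ c - c := by
    rw [LinearMap.rTensor_sub, LinearMap.rTensor_id]
    rfl
  rw [← sub_eq_zero, ← hsub]
  refine (hexact c).trans ⟨?_, ?_⟩
  · rintro ⟨y, rfl⟩
    obtain ⟨l, rfl⟩ := (TensorProduct.lid (ZMod p) Λ).symm.surjective y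
    exact ⟨l, by simp⟩
  · rintro ⟨l, rfl⟩
    exact ⟨1 ⊗ₜ[ZMod p] l, by simp⟩

end Frobenius

theorem PowerSeries.algebraMap_injective_of_away_X {A : Type*} [CommRing A] (R : Type*)
    [CommRing R] [Algebra A⟦X⟧ R] [IsLocalization.Away (X : A⟦X⟧) R] :
    Function.Injective (algebraMap A⟦X⟧ R) :=
  IsLocalization.injectiveₛ (M := Submonoid.powers X) R <| by
    rintro _ ⟨k, rfl⟩
    exact ⟨X_pow_mul_injective, mul_X_pow_injective⟩

section PhiPS

variable {p} {K : Type*} [Field K] [CharP K p] {Λ : Type*} [CommRing Λ] [Algebra (ZMod p) Λ]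

theorem add_sub_one_mul_eq_mul (n : ℕ) : n + (p - 1) * n = p * n := by
  rw [← one_add_mul, Nat.add_sub_cancel' (Fact.out : p.Prime).one_le]

theorem coeff_phiPS_mul (f : (K ⊗[ZMod p] Λ)⟦X⟧) (n : ℕ) :
    coeff (p * n) (phiPS p K Λ f) = frobTensor p K Λ (coeff n f) := by
  rw [phiPS, coeff_mk, if_pos (dvd_mul_right p n),
    Nat.mul_div_cancel_left n (Fact.out : p.Prime).pos]

theorem coeff_phiPS_of_not_dvd (f : (K ⊗[ZMod p] Λ)⟦X⟧) {n : ℕ} (hn : ¬p ∣ n) :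
    coeff n (phiPS p K Λ f) = 0 := by
  rw [phiPS, coeff_mk, if_neg hn]

theorem phiPS_C_mul_X_pow (c : K ⊗[ZMod p] Λ) (n : ℕ) :
    phiPS p K Λ (C c * X ^ n) = C (frobTensor p K Λ c) * X ^ (p * n) := by
  ext m
  rw [coeff_C_mul_X_pow]
  by_cases hm : p ∣ m
  · obtain ⟨q, rfl⟩ := hm
    simp only [coeff_phiPS_mul, coeff_C_mul_X_pow,
      Nat.mul_left_cancel_iff (Fact.out : p.Prime).pos, apply_ite (frobTensor p K Λ), map_zero]
  · rw [coeff_phiPS_of_not_dvd _ hm, if_neg]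
    rintro rfl
    exact hm (dvd_mul_right p n)

theorem phiPS_C (c : K ⊗[ZMod p] Λ) : phiPS p K Λ (C c) = C (frobTensor p K Λ c) := by
  simpa using phiPS_C_mul_X_pow c 0

theorem phiPS_X : phiPS p K Λ X = X ^ p := by
  simpa using phiPS_C_mul_X_pow (1 : K ⊗[ZMod p] Λ) 1

theorem phiPS_eq_mul_X_pow_of_map_eq_self {R : Type*} [CommRing R]
    [Algebra (K ⊗[ZMod p] Λ)⟦X⟧ R] [IsLocalization.Away (X : (K ⊗[ZMod p] Λ)⟦X⟧) R] {φ : R →+* R}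
    (hφ : ∀ f : (K ⊗[ZMod p] Λ)⟦X⟧,
      φ (algebraMap _ R f) = algebraMap _ R (phiPS p K Λ f))
    {x : R} (hx : φ x = x) {n : ℕ} {f : (K ⊗[ZMod p] Λ)⟦X⟧}
    (hf : x * algebraMap (K ⊗[ZMod p] Λ)⟦X⟧ R X ^ n = algebraMap _ R f) :
    phiPS p K Λ f = f * X ^ ((p - 1) * n) := by
  apply algebraMap_injective_of_away_X R
  calc algebraMap _ R (phiPS p K Λ f)
      = φ (algebraMap _ R f) := (hφ f).symm
    _ = x * algebraMap _ R X ^ (n + (p - 1) * n) := by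
      rw [← hf, map_mul, map_pow, hx, hφ, phiPS_X, map_pow, ← pow_mul, add_sub_one_mul_eq_mul]
    _ = algebraMap _ R (f * X ^ ((p - 1) * n)) := by
      rw [pow_add, ← mul_assoc, hf, map_mul, map_pow]

variable {f : (K ⊗[ZMod p] Λ)⟦X⟧} {n : ℕ}

theorem coeff_phiPS_of_eq_mul_X_pow (h : phiPS p K Λ f = f * X ^ ((p - 1) * n)) (t : ℕ) :
    coeff (t + (p - 1) * n) (phiPS p K Λ f) = coeff t f := by
  rw [h, coeff_mul_X_pow]

theorem frobTensor_coeff_of_phiPS_eq_mul_X_pow (h : phiPS p K Λ f = f * X ^ ((p - 1) * n)) :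
    frobTensor p K Λ (coeff n f) = coeff n f := by
  rw [← coeff_phiPS_mul, ← add_sub_one_mul_eq_mul, coeff_phiPS_of_eq_mul_X_pow h]

theorem exists_coeff_ne_zero_of_phiPS_eq_mul_X_pow (h : phiPS p K Λ f = f * X ^ ((p - 1) * n))
    {t : ℕ} (ht : coeff t f ≠ 0) : ∃ q, coeff q f ≠ 0 ∧ (p : ℤ) * (q - n) = t - n := by
  rw [← coeff_phiPS_of_eq_mul_X_pow h] at ht
  by_cases hdvd : p ∣ t + (p - 1) * n
  · obtain ⟨q, hq⟩ := hdvd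
    rw [hq, coeff_phiPS_mul] at ht
    refine ⟨q, fun h0 => ht (by rw [h0, map_zero]), ?_⟩
    have hq' : ((t + (p - 1) * n : ℕ) : ℤ) = p * q := by exact_mod_cast hq
    push_cast [Nat.cast_sub (Fact.out : p.Prime).one_le] at hq'
    linear_combination -hq'
  · exact absurd (coeff_phiPS_of_not_dvd f hdvd) ht

theorem coeff_eq_zero_of_phiPS_eq_mul_X_pow (h : phiPS p K Λ f = f * X ^ ((p - 1) * n))
    {t : ℕ} (ht : t ≠ n) : coeff t f = 0 := by
  induction hd : ((t : ℤ) - n).natAbs using Nat.strong_induction_on generalizing t with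
  | _ d ih =>
    by_contra hne
    obtain ⟨q, hq, hpq⟩ := exists_coeff_ne_zero_of_phiPS_eq_mul_X_pow h hne
    have hqn : q ≠ n := by
      rintro rfl
      simp only [sub_self, mul_zero] at hpq
      omega
    refine hq (ih _ ?_ hqn rfl)
    rw [← hd, ← hpq, Int.natAbs_mul, Int.natAbs_natCast]
    exact lt_mul_left (by omega) (Fact.out : p.Prime).one_lt

theorem exists_eq_C_tmul_mul_X_pow_of_phiPS_eq_mul_X_pow
    (h : phiPS p K Λ f = f * X ^ ((p - 1) * n)) :
    ∃ l : Λ, f = C (1 ⊗ₜ[ZMod p] l) * X ^ n := by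
  obtain ⟨l, hl⟩ := frobTensor_eq_self_iff.mp (frobTensor_coeff_of_phiPS_eq_mul_X_pow h)
  refine ⟨l, PowerSeries.ext fun t => ?_⟩
  rw [coeff_C_mul_X_pow, ← hl]
  split_ifs with ht
  · rw [ht]
  · exact coeff_eq_zero_of_phiPS_eq_mul_X_pow h ht

end PhiPS

theorem fixed_points_of_phi_eq_range
    (k' : Type*) [Field k'] [CharP k' p]
    (Λ : Type*) [CommRing Λ] [Algebra (ZMod p) Λ]
    (R : Type*) [CommRing R] [Algebra (PowerSeries (k' ⊗[ZMod p] Λ)) R]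
    [IsLocalization.Away (PowerSeries.X : PowerSeries (k' ⊗[ZMod p] Λ)) R]
    (φ : R →+* R)
    (hφ : ∀ f : PowerSeries (k' ⊗[ZMod p] Λ),
      φ (algebraMap (PowerSeries (k' ⊗[ZMod p] Λ)) R f) =
        algebraMap (PowerSeries (k' ⊗[ZMod p] Λ)) R (phiPS p k' Λ f)) :
    { x : R | φ x = x } =
      Set.range (fun l : Λ =>
        algebraMap (PowerSeries (k' ⊗[ZMod p] Λ)) R
          (PowerSeries.C ((1 : k') ⊗ₜ[ZMod p] l))) := by
  ext x
  constructor
  · intro hx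
    obtain ⟨n, f, hf⟩ := IsLocalization.Away.surj (X : (k' ⊗[ZMod p] Λ)⟦X⟧) x
    obtain ⟨l, rfl⟩ := exists_eq_C_tmul_mul_X_pow_of_phiPS_eq_mul_X_pow
      (phiPS_eq_mul_X_pow_of_map_eq_self hφ hx hf)
    have hXn := (IsLocalization.Away.algebraMap_isUnit (X : (k' ⊗[ZMod p] Λ)⟦X⟧) (S := R)).pow n
    exact ⟨l, hXn.mul_right_cancel (by rw [hf, map_mul, map_pow])⟩
  · rintro ⟨l, rfl⟩
    exact (hφ _).trans (by rw [phiPS_C, frobTensor_tmul, one_pow])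

end
end
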